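/- arXiv:1508.07515 — 6 statements merged into one kernel-verified Lean document; each statement's English description precedes it below -/
import Mathlib

section
/- The number of centrosymmetric 321-avoiding involutions in the symmetric group S_{2n} is exactly 2^n. -/
open Finset Polynomial
open scoped Classical

/-- 1-based value of a permutation of `Fin m`: `pval π i = π(i)` for `1 ≤ i ≤ m`. -/
def pval {m : ℕ} (π : Equiv.Perm (Fin m)) (i : ℕ) : ℕ :=
  if h : i - 1 < m then (π ⟨i - 1, h⟩ : ℕ) + 1 else 0

/-- `π` is centrosymmetric: `π(i) + π(m+1-i) = m+1` for all `1 ≤ i ≤ m`. -/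
def Centro {m : ℕ} (π : Equiv.Perm (Fin m)) : Prop :=
  ∀ i ∈ Finset.Icc 1 m, pval π i + pval π (m + 1 - i) = m + 1

/-- `π` avoids the pattern 321: no decreasing subsequence of length 3. -/
def Avoids321 {m : ℕ} (π : Equiv.Perm (Fin m)) : Prop :=
  ¬ ∃ i j k : Fin m, i < j ∧ j < k ∧ π k < π j ∧ π j < π i

/-- The descent set of `π`: positions `1 ≤ i < m` with `π(i) > π(i+1)`. -/
def DesSet {m : ℕ} (π : Equiv.Perm (Fin m)) : Finset ℕ :=
  (Finset.Ico 1 m).filter (fun i => pval π (i + 1) < pval π i)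

/-- The number of descents of `π`. -/
def desNum {m : ℕ} (π : Equiv.Perm (Fin m)) : ℕ := (DesSet π).card

/-- The major index of `π`: the sum of the descent positions. -/
def majStat {m : ℕ} (π : Equiv.Perm (Fin m)) : ℕ := ∑ i ∈ DesSet π, i

/-- The excedances of `π ∈ S_{2n}` among positions `1,…,n`. -/
def Epi {n : ℕ} (π : Equiv.Perm (Fin (2 * n))) : Finset ℕ :=
  (Finset.Icc 1 n).filter (fun i => i < pval π i)

/-- The set `I^C_{2n}(321)` of 321-avoiding centrosymmetric involutions of `S_{2n}`. -/
noncomputable def ICset (n : ℕ) : Finset (Equiv.Perm (Fin (2 * n))) :=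
  Finset.univ.filter (fun π => Function.Involutive π ∧ Centro π ∧ Avoids321 π)

/-!
A 321-avoiding involution `π` is determined by its openers `x < π x` and closers `π x < x`: it
matches them increasingly and has no fixed point under an arc. Reading the positions from left to
right as up steps (openers), down steps (closers) and flat steps (fixed points) gives a path that
never goes below height `0` and is flat only at height `0`. So once the openers are known, a
position is a closer exactly when the current height is positive. For a centrosymmetric `π` the
second half of the path is the mirror image of the first, hence `π` is determined by its openers
among the positions `1, …, n`, that is by `Epi π`. Conversely, for every `S ⊆ [1, n]`, matching the
up and down steps of the path built from `S` increasingly gives a centrosymmetric 321-avoiding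
involution with `Epi = S`. So `Epi` is a bijection from `ICset n` onto the subsets of `[1, n]`.
-/

section CountBelow

variable {m : ℕ}

noncomputable def countBelow (A : Finset (Fin m)) (p : ℕ) : ℕ := #{x ∈ A | x.val < p}

lemma countBelow_mono (A : Finset (Fin m)) {p q : ℕ} (h : p ≤ q) :
    countBelow A p ≤ countBelow A q :=
  card_le_card fun x hx => by simp only [mem_filter] at hx ⊢; exact ⟨hx.1, by omega⟩

lemma countBelow_lt_countBelow {A : Finset (Fin m)} {x : Fin m} (hx : x ∈ A) {p : ℕ}
    (h : x.val < p) : countBelow A x < countBelow A p := by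
  refine card_lt_card ⟨fun y hy => ?_, fun hsub => ?_⟩
  · simp only [mem_filter] at hy ⊢; exact ⟨hy.1, by omega⟩
  · simpa using hsub (mem_filter.2 ⟨hx, h⟩)

lemma countBelow_lt_card {A : Finset (Fin m)} {x : Fin m} (hx : x ∈ A) : countBelow A x < #A :=
  card_lt_card ⟨filter_subset _ _, fun hsub => by simpa using hsub hx⟩

lemma countBelow_of_le (A : Finset (Fin m)) {p : ℕ} (h : m ≤ p) : countBelow A p = #A := by
  rw [countBelow, filter_true_of_mem fun x _ => by omega]

lemma countBelow_succ (A : Finset (Fin m)) {p : ℕ} (hp : p < m) :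
    countBelow A (p + 1) = countBelow A p + if (⟨p, hp⟩ : Fin m) ∈ A then 1 else 0 := by
  have hsplit : {x ∈ A | x.val < p + 1} =
      {x ∈ A | x.val < p} ∪ {x ∈ A | x = ⟨p, hp⟩} := by
    ext x; simp only [mem_filter, mem_union, Fin.ext_iff, ← and_or_left, Nat.lt_succ_iff_lt_or_eq]
  rw [countBelow, countBelow, hsplit, card_union_of_disjoint, filter_eq']
  · split_ifs <;> simp
  · exact disjoint_filter.2 fun x _ h1 h2 => by rw [h2] at h1; exact lt_irrefl p h1

lemma eq_of_countBelow_eq {A : Finset (Fin m)} {x y : Fin m} (hx : x ∈ A) (hy : y ∈ A)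
    (h : countBelow A x = countBelow A y) : x = y := by
  rcases lt_trichotomy x y with hxy | rfl | hxy
  · exact absurd h (countBelow_lt_countBelow hx hxy).ne
  · rfl
  · exact absurd h (countBelow_lt_countBelow hy hxy).ne'

lemma countBelow_orderEmbOfFin (A : Finset (Fin m)) {k : ℕ} (hA : #A = k) (j : Fin k) :
    countBelow A (A.orderEmbOfFin hA j).val = j := by
  have : {x ∈ A | x < A.orderEmbOfFin hA j} = (Iio j).map (A.orderEmbOfFin hA).toEmbedding := by
    ext x
    simp only [mem_filter, mem_map, mem_Iio, RelEmbedding.coe_toEmbedding]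
    constructor
    · rintro ⟨hxA, hlt⟩
      obtain ⟨i, rfl⟩ : x ∈ Set.range (A.orderEmbOfFin hA) := by simpa using hxA
      exact ⟨i, (A.orderEmbOfFin hA).lt_iff_lt.1 hlt, rfl⟩
    · rintro ⟨i, hi, rfl⟩
      exact ⟨A.orderEmbOfFin_mem hA i, (A.orderEmbOfFin hA).lt_iff_lt.2 hi⟩
  simp only [countBelow, ← Fin.lt_def, this, card_map, Fin.card_Iio]

lemma orderEmbOfFin_countBelow {A : Finset (Fin m)} {k : ℕ} (hA : #A = k) {x : Fin m}
    (hx : x ∈ A) : A.orderEmbOfFin hA ⟨countBelow A x, hA ▸ countBelow_lt_card hx⟩ = x :=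
  eq_of_countBelow_eq (A.orderEmbOfFin_mem hA _) hx (countBelow_orderEmbOfFin A hA _)

end CountBelow

section Involution

variable {m : ℕ} {π : Equiv.Perm (Fin m)}

lemma avoids321_iff_of_involutive (hinv : Function.Involutive π) :
    Avoids321 π ↔ (∀ x y, x < π x → y < π y → x < y → π x < π y) ∧
      ∀ x f, x < π x → π f = f → x < f → π x < f := by
  constructor
  · intro hav
    refine ⟨fun x y hx hy hxy => ?_, fun x f hx hf hxf => ?_⟩
    · refine lt_of_not_ge fun h => hav ⟨x, y, π y, hxy, hy, ?_, ?_⟩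
      · rwa [hinv]
      · exact h.lt_of_ne fun he => hxy.ne (π.injective he).symm
    · refine lt_of_not_ge fun h => hav ⟨x, f, π x, hxf, ?_, ?_, ?_⟩
      · exact h.lt_of_ne fun he => hxf.ne (by rw [← hf, he, hinv])
      · rwa [hinv, hf]
      · rw [hf]; exact h.lt_of_ne fun he => hxf.ne (by rw [← hf, he, hinv])
  · rintro ⟨hmono, hfix⟩
    -- the right end of a descent is a closer; applied to `(π b, π a)` the left end is an opener
    have closer_of_descent : ∀ a b, a < b → π b < π a → π b < b := by
      intro a b hab hba
      by_contra! hb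
      have ha : a < π a := hab.trans (hb.trans_lt hba)
      rcases hb.lt_or_eq with hb | hb
      · exact (hmono a b ha hb hab).not_gt hba
      · exact (hfix a b ha hb.symm hab).not_gt (hb ▸ hba)
    rintro ⟨i, j, k, hij, hjk, hkj, hji⟩
    have hj₁ := closer_of_descent i j hij hji
    have hj₂ := closer_of_descent (π k) (π j) hkj (by rwa [hinv, hinv])
    rw [hinv] at hj₂
    exact lt_asymm hj₁ hj₂

end Involution

section Matching

variable {m : ℕ} {O C : Finset (Fin m)} {i : Fin m}

variable (O C) in
noncomputable def matchFun (hOC : #C = #O) (i : Fin m) : Fin m :=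
  if h : i ∈ O then C.orderEmbOfFin hOC ⟨countBelow O i, countBelow_lt_card h⟩
  else if h : i ∈ C then O.orderEmbOfFin rfl ⟨countBelow C i, hOC ▸ countBelow_lt_card h⟩
  else i

variable {hOC : #C = #O}

lemma matchFun_mem_right (hi : i ∈ O) : matchFun O C hOC i ∈ C := by
  rw [matchFun, dif_pos hi]; exact C.orderEmbOfFin_mem hOC _

lemma countBelow_matchFun_left (hi : i ∈ O) :
    countBelow C (matchFun O C hOC i) = countBelow O i := by
  rw [matchFun, dif_pos hi, countBelow_orderEmbOfFin]

lemma matchFun_of_not_mem (hO : i ∉ O) (hC : i ∉ C) : matchFun O C hOC i = i := by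
  rw [matchFun, dif_neg hO, dif_neg hC]

variable (hdisj : Disjoint O C)
include hdisj

lemma matchFun_mem_left (hi : i ∈ C) : matchFun O C hOC i ∈ O := by
  rw [matchFun, dif_neg (disjoint_right.1 hdisj hi), dif_pos hi]; exact O.orderEmbOfFin_mem rfl _

lemma countBelow_matchFun_right (hi : i ∈ C) :
    countBelow O (matchFun O C hOC i) = countBelow C i := by
  rw [matchFun, dif_neg (disjoint_right.1 hdisj hi), dif_pos hi, countBelow_orderEmbOfFin]

lemma matchFun_involutive : Function.Involutive (matchFun O C hOC) := by
  intro i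
  by_cases hO : i ∈ O
  · have hC := matchFun_mem_right (hOC := hOC) hO
    rw [matchFun, dif_neg (disjoint_right.1 hdisj hC), dif_pos hC]
    simp_rw [countBelow_matchFun_left hO, orderEmbOfFin_countBelow rfl hO]
  by_cases hC : i ∈ C
  · have hO' := matchFun_mem_left hdisj (hOC := hOC) hC
    rw [matchFun, dif_pos hO']
    simp_rw [countBelow_matchFun_right hdisj hC, orderEmbOfFin_countBelow hOC hC]
  · rw [matchFun_of_not_mem hO hC, matchFun_of_not_mem hO hC]

variable (O C) in
noncomputable def matchPerm (hOC : #C = #O) (hdisj : Disjoint O C) : Equiv.Perm (Fin m) :=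
  (matchFun_involutive (hOC := hOC) hdisj).toPerm

lemma matchPerm_involutive : Function.Involutive (matchPerm O C hOC hdisj) :=
  matchFun_involutive hdisj

lemma matchPerm_mem_left (hi : i ∈ C) : matchPerm O C hOC hdisj i ∈ O :=
  matchFun_mem_left hdisj hi

lemma matchPerm_strictMonoOn : StrictMonoOn (matchPerm O C hOC hdisj) O := by
  intro i hi j hj hij
  simp only [matchPerm, Function.Involutive.coe_toPerm, matchFun, dif_pos (mem_coe.1 hi),
    dif_pos (mem_coe.1 hj), OrderEmbedding.lt_iff_lt, Fin.mk_lt_mk]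
  exact countBelow_lt_countBelow hi hij

lemma eq_matchPerm {π : Equiv.Perm (Fin m)} (hinv : Function.Involutive π)
    (hfix : ∀ i, i ∉ O → i ∉ C → π i = i) (hmaps : ∀ i ∈ O, π i ∈ C) (hmono : StrictMonoOn π O) :
    π = matchPerm O C hOC hdisj := by
  have hO : ∀ i ∈ O, π i = matchFun O C hOC i := by
    have hunique := C.orderEmbOfFin_unique hOC (f := fun j => π (O.orderEmbOfFin rfl j))
      (fun j => hmaps _ (O.orderEmbOfFin_mem rfl j))
      (fun a b hab => hmono (O.orderEmbOfFin_mem rfl a) (O.orderEmbOfFin_mem rfl b)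
        ((O.orderEmbOfFin rfl).strictMono hab))
    intro i hi
    have := congrFun hunique ⟨countBelow O i, countBelow_lt_card hi⟩
    rw [orderEmbOfFin_countBelow rfl hi] at this
    rw [this, matchFun, dif_pos hi]
  refine Equiv.ext fun i => ?_
  by_cases hiO : i ∈ O
  · rw [hO i hiO]; rfl
  by_cases hiC : i ∈ C
  · have hmatch := matchFun_mem_left hdisj (hOC := hOC) hiC
    conv_lhs => rw [← matchFun_involutive (hOC := hOC) hdisj i, ← hO _ hmatch, hinv]
    rfl
  · rw [hfix i hiO hiC]; exact (matchFun_of_not_mem hiO hiC).symm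

lemma matchPerm_strictMonoOn_right : StrictMonoOn (matchPerm O C hOC hdisj) C := by
  intro i hi j hj hij
  refine lt_of_not_ge fun h => ?_
  have hlt := h.lt_of_ne fun he => hij.ne ((matchPerm O C hOC hdisj).injective he).symm
  have := matchPerm_strictMonoOn (hOC := hOC) hdisj (matchPerm_mem_left hdisj hj)
    (matchPerm_mem_left hdisj hi) hlt
  rw [matchPerm_involutive hdisj, matchPerm_involutive hdisj] at this
  exact lt_asymm hij this

section Ballot

variable (hup : ∀ c ∈ C, countBelow C c < countBelow O c)
include hup

lemma lt_matchPerm (hi : i ∈ O) : i < matchPerm O C hOC hdisj i := by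
  have hc := matchFun_mem_right (hOC := hOC) hi
  have hrank := countBelow_matchFun_left (hOC := hOC) hi
  refine lt_of_not_ge fun h => ?_
  have hlt : matchFun O C hOC i < i :=
    h.lt_of_ne fun he => disjoint_left.1 hdisj hi (he ▸ hc)
  have := countBelow_mono O (Fin.le_def.1 hlt.le)
  have := hup _ hc
  omega

lemma matchPerm_lt (hi : i ∈ C) : matchPerm O C hOC hdisj i < i := by
  have := lt_matchPerm (hOC := hOC) hdisj hup (matchPerm_mem_left (hOC := hOC) hdisj hi)
  rwa [matchPerm_involutive hdisj] at this

lemma lt_matchPerm_iff : i < matchPerm O C hOC hdisj i ↔ i ∈ O := by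
  refine ⟨fun h => ?_, lt_matchPerm hdisj hup⟩
  by_contra hiO
  by_cases hiC : i ∈ C
  · exact lt_asymm h (matchPerm_lt hdisj hup hiC)
  · exact h.ne' (matchFun_of_not_mem hiO hiC)

lemma matchPerm_fixed_iff : matchPerm O C hOC hdisj i = i ↔ i ∉ O ∧ i ∉ C := by
  refine ⟨fun h => ⟨fun hi => ?_, fun hi => ?_⟩, fun h => matchFun_of_not_mem h.1 h.2⟩
  · exact (lt_matchPerm hdisj hup hi).ne' h
  · exact (matchPerm_lt hdisj hup hi).ne h

lemma avoids321_matchPerm (hflat : ∀ f, f ∉ O → f ∉ C → countBelow O f ≤ countBelow C f) :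
    Avoids321 (matchPerm O C hOC hdisj) := by
  refine (avoids321_iff_of_involutive (matchPerm_involutive hdisj)).2 ⟨?_, ?_⟩
  · intro x y hx hy hxy
    rw [lt_matchPerm_iff hdisj hup] at hx hy
    exact matchPerm_strictMonoOn hdisj hx hy hxy
  · intro x f hx hf hxf
    rw [lt_matchPerm_iff hdisj hup] at hx
    rw [matchPerm_fixed_iff hdisj hup] at hf
    have hc := matchFun_mem_right (hOC := hOC) hx
    have hrank := countBelow_matchFun_left (hOC := hOC) hx
    refine lt_of_not_ge fun h => ?_
    have hlt : f < matchFun O C hOC x := h.lt_of_ne fun he => hf.2 (he ▸ hc)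
    have := countBelow_mono C (Fin.le_def.1 hlt.le)
    have := countBelow_lt_countBelow hx hxf
    have := hflat f hf.1 hf.2
    omega

end Ballot

end Matching

section Arcs

variable {m : ℕ} (π : Equiv.Perm (Fin m))

noncomputable def openers : Finset (Fin m) := {x | x < π x}

noncomputable def closers : Finset (Fin m) := {x | π x < x}

variable {π}

lemma mem_openers {x : Fin m} : x ∈ openers π ↔ x < π x := by simp [openers]

lemma mem_closers {x : Fin m} : x ∈ closers π ↔ π x < x := by simp [closers]

variable (hinv : Function.Involutive π)
include hinv

lemma countBelow_closers_lt_openers {x : Fin m} (hx : π x < x) :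
    countBelow (closers π) x < countBelow (openers π) x := by
  have hle : #(insert x {c ∈ closers π | c.val < x.val}) ≤ #{o ∈ openers π | o.val < x.val} := by
    refine card_le_card_of_injOn π (fun c hc => ?_) π.injective.injOn
    simp only [coe_insert, Set.mem_insert_iff, mem_coe, mem_filter, mem_closers] at hc
    simp only [mem_coe, mem_filter, mem_openers, hinv _, ← Fin.lt_def]
    rcases hc with rfl | ⟨hc, hcx⟩
    · exact ⟨hx, hx⟩
    · exact ⟨hc, hc.trans (Fin.lt_def.2 hcx)⟩
  rwa [card_insert_of_notMem (by simp), Nat.succ_le_iff] at hle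

lemma countBelow_openers_eq_closers (hav : Avoids321 π) {f : Fin m} (hf : π f = f) :
    countBelow (openers π) f = countBelow (closers π) f := by
  have hfix := ((avoids321_iff_of_involutive hinv).1 hav).2
  apply le_antisymm <;> refine card_le_card_of_injOn π (fun x hx => ?_) π.injective.injOn <;>
    simp only [mem_coe, mem_filter, mem_openers, mem_closers, hinv _, ← Fin.lt_def] at hx ⊢
  · exact ⟨hx.1, hfix x f hx.1 hf hx.2⟩
  · exact ⟨hx.1, hx.1.trans hx.2⟩

lemma eq_matchPerm_of_avoids321 (hav : Avoids321 π) {O C : Finset (Fin m)} (hO : openers π = O)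
    (hC : closers π = C) (hOC : #C = #O) (hdisj : Disjoint O C) :
    π = matchPerm O C hOC hdisj := by
  subst hO hC
  refine eq_matchPerm hdisj hinv (fun i hO hC => ?_) (fun i hi => ?_) (fun i hi j hj h => ?_)
  · rw [mem_openers] at hO; rw [mem_closers] at hC
    exact (le_of_not_gt hO).antisymm (le_of_not_gt hC)
  · rw [mem_openers] at hi; rw [mem_closers, hinv]; exact hi
  · exact ((avoids321_iff_of_involutive hinv).1 hav).1 i j (mem_openers.1 hi) (mem_openers.1 hj) h

end Arcs

lemma pval_val_add_one {m : ℕ} (π : Equiv.Perm (Fin m)) (x : Fin m) :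
    pval π (x.val + 1) = π x + 1 := by
  simp [pval]

lemma centro_iff {m : ℕ} {π : Equiv.Perm (Fin m)} : Centro π ↔ ∀ x, π x.rev = (π x).rev := by
  have hsum : ∀ x : Fin m, pval π (x.val + 1) + pval π (m + 1 - (x.val + 1)) = m + 1 ↔
      π x.rev = (π x).rev := by
    intro x
    rw [show m + 1 - (x.val + 1) = x.rev.val + 1 by rw [Fin.val_rev]; omega,
      pval_val_add_one, pval_val_add_one, Fin.ext_iff, Fin.val_rev]
    omega
  constructor
  · intro h x
    exact (hsum x).1 (h _ (by simp))
  · intro h i hi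
    obtain ⟨x, rfl⟩ : ∃ x : Fin m, i = x.val + 1 :=
      ⟨⟨i - 1, by rw [mem_Icc] at hi; omega⟩, by rw [mem_Icc] at hi; dsimp only; omega⟩
    exact (hsum x).2 (h x)

lemma add_one_mem_Epi_iff {n : ℕ} {π : Equiv.Perm (Fin (2 * n))} {x : Fin (2 * n)}
    (hx : x.val < n) : x.val + 1 ∈ Epi π ↔ x < π x := by
  simp only [Epi, mem_filter, mem_Icc, pval_val_add_one]
  omega

section Word

/-- Height after `p` steps of the path whose `i`-th step goes up if `i ∈ S` and down otherwise;
by truncated subtraction, a down step at height `0` is a flat step (a fixed point). -/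
def balance (S : Finset ℕ) : ℕ → ℕ
  | 0 => 0
  | p + 1 => if p + 1 ∈ S then balance S p + 1 else balance S p - 1

lemma balance_succ (S : Finset ℕ) (p : ℕ) :
    balance S (p + 1) = if p + 1 ∈ S then balance S p + 1 else balance S p - 1 := rfl

variable (n : ℕ) (S : Finset ℕ)

/- Positions are `0`-based. The first half of the path is read off `S` as in `balance`; the second
half is its mirror image: position `x ≥ n` is an opener iff `2 * n - 1 - x` is a closer. -/
def IsOpener (x : ℕ) : Prop :=
  if x < n then x + 1 ∈ S else 2 * n - x ∉ S ∧ 0 < balance S (2 * n - 1 - x)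

def IsCloser (x : ℕ) : Prop :=
  if x < n then x + 1 ∉ S ∧ 0 < balance S x else 2 * n - x ∈ S

def wordBalance (p : ℕ) : ℕ := balance S (min p (2 * n - p))

variable {n S}

lemma isOpener_sub_iff {x : ℕ} (hx : x < 2 * n) :
    IsOpener n S (2 * n - 1 - x) ↔ IsCloser n S x := by
  unfold IsOpener IsCloser
  by_cases h : x < n
  · rw [if_neg (by omega), if_pos h, show 2 * n - (2 * n - 1 - x) = x + 1 by omega,
      show 2 * n - 1 - (2 * n - 1 - x) = x by omega]
  · rw [if_pos (by omega), if_neg h, show 2 * n - 1 - x + 1 = 2 * n - x by omega]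

lemma not_isOpener_and_isCloser {x : ℕ} : ¬(IsOpener n S x ∧ IsCloser n S x) := by
  unfold IsOpener IsCloser
  split_ifs <;> tauto

lemma wordBalance_succ {p : ℕ} (hp : p < 2 * n) :
    wordBalance n S (p + 1) + (if IsCloser n S p then 1 else 0) =
      wordBalance n S p + (if IsOpener n S p then 1 else 0) := by
  unfold wordBalance IsOpener IsCloser
  by_cases h : p < n
  · rw [min_eq_left (by omega), min_eq_left (by omega), balance_succ]
    simp only [if_pos h]
    split_ifs <;> grind
  · rw [min_eq_right (by omega), min_eq_right (by omega),
      show 2 * n - (p + 1) = 2 * n - 1 - p by omega, show 2 * n - p = (2 * n - 1 - p) + 1 by omega, balance_succ]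
    simp only [if_neg h]
    split_ifs <;> grind

lemma wordBalance_pos {p : ℕ} (hp : p < 2 * n) (h : IsCloser n S p) : 0 < wordBalance n S p := by
  have := wordBalance_succ (S := S) hp
  rw [if_pos h, if_neg fun h' => not_isOpener_and_isCloser ⟨h', h⟩] at this
  omega

lemma wordBalance_eq_zero {p : ℕ} (hp : p < 2 * n) (hO : ¬IsOpener n S p) (hC : ¬IsCloser n S p) :
    wordBalance n S p = 0 := by
  unfold IsOpener at hO
  unfold IsCloser at hC
  unfold wordBalance
  by_cases h : p < n
  · rw [if_pos h] at hO hC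
    rw [min_eq_left (by omega)]
    exact Nat.eq_zero_of_not_pos fun hb => hC ⟨hO, hb⟩
  · rw [if_neg h] at hO hC
    have hflat : ¬0 < balance S (2 * n - 1 - p) := fun hb => hO ⟨hC, hb⟩
    rw [show 2 * n - p = (2 * n - 1 - p) + 1 by omega] at hC
    rw [min_eq_right (by omega), show 2 * n - p = (2 * n - 1 - p) + 1 by omega, balance_succ,
      if_neg hC]
    omega

variable (n S)

noncomputable def wordOpeners : Finset (Fin (2 * n)) := {x | IsOpener n S x}

noncomputable def wordClosers : Finset (Fin (2 * n)) := {x | IsCloser n S x}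

variable {n S}

lemma mem_wordOpeners {x : Fin (2 * n)} : x ∈ wordOpeners n S ↔ IsOpener n S x := by
  simp [wordOpeners]

lemma mem_wordClosers {x : Fin (2 * n)} : x ∈ wordClosers n S ↔ IsCloser n S x := by
  simp [wordClosers]

lemma mem_wordOpeners_iff_rev {x : Fin (2 * n)} :
    x ∈ wordOpeners n S ↔ x.rev ∈ wordClosers n S := by
  rw [mem_wordOpeners, mem_wordClosers, ← isOpener_sub_iff x.rev.isLt, Fin.val_rev,
    show 2 * n - 1 - (2 * n - (x + 1)) = x by omega]

lemma disjoint_wordOpeners_wordClosers : Disjoint (wordOpeners n S) (wordClosers n S) :=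
  disjoint_left.2 fun _ hO hC =>
    not_isOpener_and_isCloser ⟨mem_wordOpeners.1 hO, mem_wordClosers.1 hC⟩

lemma countBelow_wordOpeners {p : ℕ} (hp : p ≤ 2 * n) :
    countBelow (wordOpeners n S) p = countBelow (wordClosers n S) p + wordBalance n S p := by
  induction p with
  | zero => simp [countBelow, wordBalance, balance]
  | succ p ih =>
    have hstep := wordBalance_succ (n := n) (S := S) (p := p) (by omega)
    rw [countBelow_succ _ (by omega), countBelow_succ _ (by omega), ih (by omega)]
    simp only [mem_wordOpeners, mem_wordClosers] at hstep ⊢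
    omega

lemma card_wordClosers : #(wordClosers n S) = #(wordOpeners n S) := by
  have := countBelow_wordOpeners (S := S) (le_refl (2 * n))
  rwa [countBelow_of_le _ le_rfl, countBelow_of_le _ le_rfl, wordBalance, Nat.sub_self,
    _root_.min_zero, balance, add_zero, eq_comm] at this

variable (n S)

noncomputable def permOfSubset : Equiv.Perm (Fin (2 * n)) :=
  matchPerm (wordOpeners n S) (wordClosers n S) card_wordClosers disjoint_wordOpeners_wordClosers

end Word

section PermOfSubset

variable {n : ℕ} {S : Finset ℕ}

lemma countBelow_wordClosers_lt {x : Fin (2 * n)} (hx : x ∈ wordClosers n S) :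
    countBelow (wordClosers n S) x < countBelow (wordOpeners n S) x := by
  rw [countBelow_wordOpeners x.isLt.le]
  have := wordBalance_pos x.isLt (mem_wordClosers.1 hx)
  omega

lemma countBelow_wordOpeners_le {x : Fin (2 * n)} (hO : x ∉ wordOpeners n S)
    (hC : x ∉ wordClosers n S) :
    countBelow (wordOpeners n S) x ≤ countBelow (wordClosers n S) x := by
  rw [countBelow_wordOpeners x.isLt.le,
    wordBalance_eq_zero x.isLt (mt mem_wordOpeners.2 hO) (mt mem_wordClosers.2 hC)]
  exact le_rfl

lemma permOfSubset_involutive : Function.Involutive (permOfSubset n S) :=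
  matchPerm_involutive _

lemma lt_permOfSubset_iff {x : Fin (2 * n)} : x < permOfSubset n S x ↔ x ∈ wordOpeners n S :=
  lt_matchPerm_iff _ fun _ => countBelow_wordClosers_lt

lemma avoids321_permOfSubset : Avoids321 (permOfSubset n S) :=
  avoids321_matchPerm _ (fun _ => countBelow_wordClosers_lt) fun _ => countBelow_wordOpeners_le

lemma centro_permOfSubset : Centro (permOfSubset n S) := by
  set g := permOfSubset n S
  -- conjugation by `Fin.rev` swaps openers and closers, so `eq_matchPerm` applies to it
  have hconj : Fin.revPerm * g * Fin.revPerm = g := by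
    refine eq_matchPerm _ (fun x => ?_) (fun x hO hC => ?_) (fun x hx => ?_) (fun x hx y hy h => ?_)
    · simp [g, permOfSubset_involutive _]
    · rw [mem_wordOpeners_iff_rev] at hO
      rw [← Fin.rev_rev x, ← mem_wordOpeners_iff_rev] at hC
      simp [g, permOfSubset, matchPerm, matchFun_of_not_mem hC hO]
    · simp only [Equiv.Perm.mul_apply, Fin.revPerm_apply]
      exact mem_wordOpeners_iff_rev.1 (matchPerm_mem_left _ (mem_wordOpeners_iff_rev.1 hx))
    · simp only [Equiv.Perm.mul_apply, Fin.revPerm_apply, Fin.rev_lt_rev]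
      exact matchPerm_strictMonoOn_right _ (mem_wordOpeners_iff_rev.1 hy)
        (mem_wordOpeners_iff_rev.1 hx) (Fin.rev_lt_rev.2 h)
  refine centro_iff.2 fun x => ?_
  conv_rhs => rw [← hconj]
  simp

lemma permOfSubset_mem_ICset : permOfSubset n S ∈ ICset n := by
  simp only [ICset, mem_filter, mem_univ, true_and]
  exact ⟨permOfSubset_involutive, centro_permOfSubset, avoids321_permOfSubset⟩

lemma exists_fin_of_mem_Icc {i : ℕ} (hi : i ∈ Icc 1 n) :
    ∃ x : Fin (2 * n), x.val < n ∧ i = x.val + 1 := by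
  rw [mem_Icc] at hi
  exact ⟨⟨i - 1, by omega⟩, by simp only; omega, by simp only; omega⟩

lemma Epi_permOfSubset (hS : S ⊆ Icc 1 n) : Epi (permOfSubset n S) = S := by
  ext i
  by_cases hi : i ∈ Icc 1 n
  · obtain ⟨x, hx, rfl⟩ := exists_fin_of_mem_Icc hi
    rw [add_one_mem_Epi_iff hx, lt_permOfSubset_iff, mem_wordOpeners, IsOpener, if_pos hx]
  · exact iff_of_false (fun h => hi (filter_subset _ _ h)) fun h => hi (hS h)

end PermOfSubset

section Injectivity

variable {n : ℕ} {π : Equiv.Perm (Fin (2 * n))}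

lemma mem_openers_iff_mem_wordOpeners {x : Fin (2 * n)} (hx : x.val < n) :
    x ∈ openers π ↔ x ∈ wordOpeners n (Epi π) := by
  rw [mem_openers, mem_wordOpeners, IsOpener, if_pos hx, add_one_mem_Epi_iff hx]

lemma mem_openers_iff_rev_mem_closers (hcen : Centro π) {x : Fin (2 * n)} :
    x ∈ openers π ↔ x.rev ∈ closers π := by
  rw [mem_openers, mem_closers, centro_iff.1 hcen, Fin.rev_lt_rev]

variable (hinv : Function.Involutive π) (hav : Avoids321 π)
include hinv hav

lemma countBelow_openers_eq_balance {p : ℕ} (hp : p ≤ n) :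
    countBelow (openers π) p = countBelow (closers π) p + balance (Epi π) p := by
  induction p with
  | zero => simp [countBelow, balance]
  | succ p ih =>
    set x : Fin (2 * n) := ⟨p, by omega⟩
    have hEpi : p + 1 ∈ Epi π ↔ x < π x := add_one_mem_Epi_iff (x := x) (by dsimp only [x]; omega)
    rw [countBelow_succ _ (by omega), countBelow_succ _ (by omega), balance_succ, ih (by omega)]
    simp only [mem_openers, mem_closers]
    rcases lt_trichotomy x (π x) with h | h | h
    · rw [if_pos h, if_neg (lt_asymm h), if_pos (hEpi.2 h)]
      omega
    · have hfix : countBelow (openers π) p = countBelow (closers π) p :=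
        countBelow_openers_eq_closers hinv hav h.symm
      rw [if_neg h.not_lt, if_neg h.not_gt, if_neg (mt hEpi.1 h.not_lt)]
      omega
    · have hlt : countBelow (closers π) p < countBelow (openers π) p :=
        countBelow_closers_lt_openers hinv h
      rw [if_neg (lt_asymm h), if_pos h, if_neg (mt hEpi.1 (lt_asymm h))]
      omega

lemma mem_closers_iff_mem_wordClosers {x : Fin (2 * n)} (hx : x.val < n) :
    x ∈ closers π ↔ x ∈ wordClosers n (Epi π) := by
  have hbal := countBelow_openers_eq_balance hinv hav hx.le
  rw [mem_closers, mem_wordClosers, IsCloser, if_pos hx, add_one_mem_Epi_iff hx]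
  constructor
  · intro h
    have := countBelow_closers_lt_openers hinv h
    exact ⟨lt_asymm h, by omega⟩
  · rintro ⟨hno, hpos⟩
    rcases lt_trichotomy x (π x) with h | h | h
    · exact absurd h hno
    · have := countBelow_openers_eq_closers hinv hav h.symm
      omega
    · exact h

lemma openers_eq_and_closers_eq (hcen : Centro π) :
    openers π = wordOpeners n (Epi π) ∧ closers π = wordClosers n (Epi π) := by
  suffices h : ∀ x : Fin (2 * n), (x ∈ openers π ↔ x ∈ wordOpeners n (Epi π)) ∧
      (x ∈ closers π ↔ x ∈ wordClosers n (Epi π)) from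
    ⟨ext fun x => (h x).1, ext fun x => (h x).2⟩
  intro x
  by_cases hx : x.val < n
  · exact ⟨mem_openers_iff_mem_wordOpeners hx, mem_closers_iff_mem_wordClosers hinv hav hx⟩
  have hrev : x.rev.val < n := by rw [Fin.val_rev]; omega
  constructor
  · rw [mem_openers_iff_rev_mem_closers hcen, mem_wordOpeners_iff_rev]
    exact mem_closers_iff_mem_wordClosers hinv hav hrev
  · rw [← Fin.rev_rev x, ← mem_openers_iff_rev_mem_closers hcen, ← mem_wordOpeners_iff_rev]
    exact mem_openers_iff_mem_wordOpeners hrev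

lemma eq_permOfSubset_Epi (hcen : Centro π) : π = permOfSubset n (Epi π) :=
  eq_matchPerm_of_avoids321 hinv hav (openers_eq_and_closers_eq hinv hav hcen).1
    (openers_eq_and_closers_eq hinv hav hcen).2 _ _

end Injectivity

/-- The number of 321-avoiding centrosymmetric involutions of `S_{2n}` is `2^n`. -/
theorem card_centro_involutions_avoiding_321 (n : ℕ) : (ICset n).card = 2 ^ n := by
  have hbij : #(ICset n) = #(Icc 1 n).powerset := by
    refine card_bij' (fun π _ => Epi π) (fun S _ => permOfSubset n S) (fun π _ => ?_)
      (fun S _ => permOfSubset_mem_ICset) (fun π hπ => ?_) (fun S hS => ?_)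
    · exact mem_powerset.2 (filter_subset _ _)
    · simp only [ICset, mem_filter, mem_univ, true_and] at hπ
      exact (eq_permOfSubset_Epi hπ.1 hπ.2.2 hπ.2.1).symm
    · exact Epi_permOfSubset (mem_powerset.1 hS)
  rw [hbij, card_powerset, Nat.card_Icc, Nat.add_sub_cancel]
end

section
/- For every 321-avoiding centrosymmetric involution π of S_{2n}, the set of descents of π among positions 1,...,n equals {i ∈ [n] : i ∈ E_π and i+1 ∉ E_π}, where E_π = {i ∈ [n] : π(i) > i}. (Here for i = n, note n+1 ∉ E_π by convention since E_π ⊆ [n].) -/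
/-!
In a 321-avoiding involution every inversion `a < b`, `π b < π a`, has `a` an excedance and `b`
a weak anti-excedance: otherwise one of the 2-cycles through `a` or `b` completes the inversion to
a 321 pattern. For adjacent positions the converse holds as well, which identifies the descents
with the positions `i ∈ E_π`, `i + 1 ∉ E_π`. At the middle position `n` the condition on
`π(n+1)` is automatic, because centrosymmetry gives `π(n) + π(n+1) = 2n + 1`.
-/

open Finset Polynomial
open scoped Classical

variable {m : ℕ} {π : Equiv.Perm (Fin m)}

theorem pval_succ (a : Fin m) : pval π (a + 1) = π a + 1 := by
  simp [pval]

theorem Avoids321.lt_apply_and_apply_le_of_inversion (hinv : Function.Involutive π)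
    (h321 : Avoids321 π) {a b : Fin m} (hab : a < b) (hπ : π b < π a) :
    a < π a ∧ π b ≤ b := by
  constructor
  · by_contra! ha
    exact h321 ⟨π b, π a, b, hπ, ha.trans_lt hab,
      by rw [hinv a]; exact hπ.trans_le ha, by rwa [hinv a, hinv b]⟩
  · by_contra! hb
    exact h321 ⟨a, b, π b, hab, hb, by rwa [hinv b], hπ⟩

theorem Avoids321.apply_succ_lt_iff (hinv : Function.Involutive π) (h321 : Avoids321 π)
    {a b : Fin m} (hab : (a : ℕ) + 1 = b) :
    π b < π a ↔ a < π a ∧ π b ≤ b := by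
  refine ⟨h321.lt_apply_and_apply_le_of_inversion hinv (Fin.lt_def.mpr (by omega)), ?_⟩
  rintro ⟨ha, hb⟩
  have hne : π b ≠ π a := π.injective.ne (Fin.ne_of_gt (Fin.lt_def.mpr (by omega)))
  rw [Fin.lt_def] at ha ⊢
  rw [Fin.le_def] at hb
  have := Fin.val_ne_of_ne hne
  omega

theorem Avoids321.pval_succ_lt_iff (hinv : Function.Involutive π) (h321 : Avoids321 π)
    {i : ℕ} (hi : 1 ≤ i) (him : i < m) :
    pval π (i + 1) < pval π i ↔ i < pval π i ∧ pval π (i + 1) ≤ i + 1 := by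
  obtain ⟨a, rfl⟩ : ∃ a : Fin m, i = a + 1 := ⟨⟨i - 1, by omega⟩, by simp; omega⟩
  set b : Fin m := ⟨a + 1, him⟩
  have key := h321.apply_succ_lt_iff hinv (a := a) (b := b) rfl
  rw [pval_succ, show (a : ℕ) + 1 + 1 = b + 1 from rfl, pval_succ]
  simp only [Fin.lt_def, Fin.le_def] at key
  omega

theorem Centro.pval_add_pval_succ_middle {n : ℕ} {π : Equiv.Perm (Fin (2 * n))} (hc : Centro π)
    (hn : 1 ≤ n) : pval π n + pval π (n + 1) = 2 * n + 1 := by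
  have h := hc n (mem_Icc.mpr ⟨hn, by omega⟩)
  rwa [show 2 * n + 1 - n = n + 1 by omega] at h

/-- For `π ∈ I^C_{2n}(321)`, `Des^+(π) = {i ∈ [n] : i ∈ E_π ∧ i+1 ∉ E_π}`. -/
theorem desPlus_eq_excedance_descents (n : ℕ) (π : Equiv.Perm (Fin (2 * n)))
    (hπ : π ∈ ICset n) :
    (DesSet π).filter (· ≤ n) =
      (Finset.Icc 1 n).filter (fun i => i ∈ Epi π ∧ i + 1 ∉ Epi π) := by
  obtain ⟨hinv, hcen, h321⟩ := (mem_filter.mp hπ).2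
  ext i
  simp only [DesSet, Epi, mem_filter, mem_Ico, mem_Icc]
  by_cases hi : 1 ≤ i ∧ i ≤ n
  · have hdes := h321.pval_succ_lt_iff hinv hi.1 (by omega : i < 2 * n)
    have hmid := hcen.pval_add_pval_succ_middle (by omega : 1 ≤ n)
    obtain rfl | hin := eq_or_ne i n <;> omega
  · omega
end

section
/- The generating polynomial of the statistic des^+ over 321-avoiding centrosymmetric involutions of S_{2n} satisfies ∑_{π ∈ I^C_{2n}(321)} q^{des^+(π)} = ∑_{k ≥ 0} C(n+1, 2k) q^k. -/
open Finset Polynomial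
open scoped Classical

/-!
A 321-avoiding involution of `[0, m)` is encoded by a Motzkin path whose flat steps lie on the
axis: the path goes up at the excedances and down at the deficiencies, and since the arcs of the
involution do not nest, the `k`-th up step is matched with the `k`-th down step. Conversely, every
such path arises in this way.

For a centrosymmetric involution of `[0, 2n)` the second half of the path is the mirror image of
the first with up and down steps exchanged, and the first half is forced by the set `T ⊆ [0, n)`
of its up steps: any other step goes down exactly when the path is above the axis. Hence `π ↦ T`
is a bijection from `I^C_{2n}(321)` onto the subsets of `[0, n)`, under which the descents of `π`
among the first `n` positions are the last elements of the maximal blocks of consecutive integers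
in `T`. The subsets of `[0, n)` with `k` blocks number `C(n + 1, 2k)`, by a two-term recursion in
`n` and Pascal's rule.
-/

namespace Nat

variable {p q : ℕ → Prop} [DecidablePred p] [DecidablePred q]

theorem nth_mem_of_lt_count {k n : ℕ} (h : k < count p n) : p (nth p k) :=
  nth_mem k fun hf => h.trans_le (count_le_card hf n)

theorem count_nth_of_lt_count {k n : ℕ} (h : k < count p n) : count p (nth p k) = k :=
  count_nth fun hf => h.trans_le (count_le_card hf n)

theorem le_nth_of_count_le_of_lt_count {i k n : ℕ} (hk : k < count p n) (h : count p i ≤ k) :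
    i ≤ nth p k := by
  by_contra! hlt
  have := count_strict_mono (nth_mem_of_lt_count hk) hlt
  rw [count_nth_of_lt_count hk] at this
  omega

theorem nth_lt_nth_of_lt_count {k l n : ℕ} (hkl : k < l) (hl : l < count p n) :
    nth p k < nth p l :=
  nth_lt_nth' hkl fun hf => hl.trans_le (count_le_card hf n)

theorem count_eq_count_of_involutive {g : ℕ → ℕ} (hg : Function.Involutive g) {a b : ℕ}
    (hpq : ∀ x < a, p x → g x < b ∧ q (g x)) (hqp : ∀ y < b, q y → g y < a ∧ p (g y)) :
    count p a = count q b := by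
  simp only [count_eq_card_filter_range]
  refine card_nbij' g g (fun x hx => ?_) (fun y hy => ?_) (fun x _ => hg x) (fun y _ => hg y)
  · simp only [coe_filter, mem_range, Set.mem_ofPred_eq] at hx ⊢
    exact hpq x hx.1 hx.2
  · simp only [coe_filter, mem_range, Set.mem_ofPred_eq] at hy ⊢
    exact hqp y hy.1 hy.2

theorem count_congr_of_lt {n : ℕ} (h : ∀ i < n, p i ↔ q i) : count p n = count q n :=
  (count_mono_left fun i hi => (h i hi).mp).antisymm (count_mono_left fun i hi => (h i hi).mpr)

theorem count_add_count_reflect {m : ℕ} (h : ∀ j < m, q j ↔ p (m - 1 - j)) :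
    ∀ t ≤ m, count q t + count p (m - t) = count p m
  | 0, _ => by simp
  | t + 1, ht => by
    have ih := count_add_count_reflect h t (by omega)
    rw [show m - t = m - (t + 1) + 1 by omega, count_succ] at ih
    have hq : q t ↔ p (m - (t + 1)) := by
      rw [h t (by omega), show m - 1 - t = m - (t + 1) by omega]
    rw [count_succ, ← ih, if_congr hq rfl rfl]
    ring

end Nat

/-- `A` and `B` are the up and down steps of a lattice path of length `m` (the other steps being
flat) that never goes below the axis, ends on it, and has its flat steps on the axis. Matching the
`k`-th up step with the `k`-th down step turns such words into the 321-avoiding involutions. -/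
structure IsMotzkinWord (A B : ℕ → Prop) [DecidablePred A] [DecidablePred B]
    (m : ℕ) : Prop where
  not_down_of_up : ∀ i, A i → ¬ B i
  lt_of_up : ∀ i, A i → i < m
  lt_of_down : ∀ i, B i → i < m
  count_down_le : ∀ i ≤ m, Nat.count B i ≤ Nat.count A i
  count_down_eq : Nat.count B m = Nat.count A m
  count_eq_of_flat : ∀ i < m, ¬ A i → ¬ B i → Nat.count A i = Nat.count B i

noncomputable def matching (A B : ℕ → Prop) [DecidablePred A] [DecidablePred B]
    (i : ℕ) : ℕ :=
  if A i then Nat.nth B (Nat.count A i) else if B i then Nat.nth A (Nat.count B i) else i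

def AvoidsDecreasingTriple (g : ℕ → ℕ) : Prop :=
  ∀ ⦃p q r⦄, p < q → q < r → ¬ (g r < g q ∧ g q < g p)

section Matching

variable {A B : ℕ → Prop} [DecidablePred A] [DecidablePred B] {i : ℕ}

theorem matching_of_up (hi : A i) : matching A B i = Nat.nth B (Nat.count A i) := if_pos hi

theorem matching_of_not_up_of_down (hA : ¬ A i) (hB : B i) :
    matching A B i = Nat.nth A (Nat.count B i) := by
  rw [matching, if_neg hA, if_pos hB]

theorem matching_of_flat (hA : ¬ A i) (hB : ¬ B i) : matching A B i = i := by
  rw [matching, if_neg hA, if_neg hB]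

theorem matching_congr {A' B' : ℕ → Prop} [DecidablePred A'] [DecidablePred B']
    (hA : ∀ i, A i ↔ A' i) (hB : ∀ i, B i ↔ B' i) : matching A B = matching A' B' := by
  obtain rfl : A = A' := funext fun i => propext (hA i)
  obtain rfl : B = B' := funext fun i => propext (hB i)
  congr

end Matching

namespace IsMotzkinWord

variable {A B : ℕ → Prop} [DecidablePred A] [DecidablePred B] {m : ℕ}
  (hW : IsMotzkinWord A B m)
include hW

theorem count_up_lt {i : ℕ} (hi : A i) : Nat.count A i < Nat.count A m :=
  Nat.count_strict_mono hi (hW.lt_of_up i hi)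

theorem count_down_lt {i : ℕ} (hi : B i) : Nat.count B i < Nat.count A m :=
  hW.count_down_eq ▸ Nat.count_strict_mono hi (hW.lt_of_down i hi)

theorem nth_up_lt_nth_down {k : ℕ} (hk : k < Nat.count A m) : Nat.nth A k < Nat.nth B k := by
  have hkB : k < Nat.count B m := hW.count_down_eq ▸ hk
  have hj := Nat.nth_mem_of_lt_count hkB
  have hballot := hW.count_down_le _ (hW.lt_of_down _ hj)
  rw [Nat.count_succ, if_pos hj, Nat.count_nth_of_lt_count hkB] at hballot
  refine lt_of_le_of_ne (Nat.lt_succ_iff.mp (Nat.nth_lt_of_lt_count hballot)) fun heq => ?_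
  exact hW.not_down_of_up _ (Nat.nth_mem_of_lt_count hk) (heq ▸ hj)

theorem matching_of_down {i : ℕ} (hi : B i) : matching A B i = Nat.nth A (Nat.count B i) :=
  matching_of_not_up_of_down (fun h => hW.not_down_of_up i h hi) hi

theorem down_matching_of_up {i : ℕ} (hi : A i) :
    B (matching A B i) ∧ Nat.count B (matching A B i) = Nat.count A i := by
  have hk : Nat.count A i < Nat.count B m := hW.count_down_eq ▸ hW.count_up_lt hi
  rw [matching_of_up hi]
  exact ⟨Nat.nth_mem_of_lt_count hk, Nat.count_nth_of_lt_count hk⟩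

theorem up_matching_of_down {i : ℕ} (hi : B i) :
    A (matching A B i) ∧ Nat.count A (matching A B i) = Nat.count B i := by
  have hk := hW.count_down_lt hi
  rw [hW.matching_of_down hi]
  exact ⟨Nat.nth_mem_of_lt_count hk, Nat.count_nth_of_lt_count hk⟩

theorem lt_matching_of_up {i : ℕ} (hi : A i) : i < matching A B i := by
  have := hW.nth_up_lt_nth_down (hW.count_up_lt hi)
  rwa [Nat.nth_count hi, ← matching_of_up hi] at this

theorem matching_lt_of_down {i : ℕ} (hi : B i) : matching A B i < i := by
  have := hW.nth_up_lt_nth_down (hW.count_down_lt hi)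
  rwa [Nat.nth_count hi, ← hW.matching_of_down hi] at this

theorem matching_le_of_not_up {i : ℕ} (hi : ¬ A i) : matching A B i ≤ i := by
  by_cases hB : B i
  · exact (hW.matching_lt_of_down hB).le
  · exact (matching_of_flat hi hB).le

theorem lt_matching_iff {i : ℕ} : i < matching A B i ↔ A i :=
  ⟨fun h => by_contra fun hA => (hW.matching_le_of_not_up hA).not_gt h, hW.lt_matching_of_up⟩

theorem matching_involutive : Function.Involutive (matching A B) := by
  intro i
  by_cases hA : A i
  · obtain ⟨hB, hcount⟩ := hW.down_matching_of_up hA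
    rw [hW.matching_of_down hB, hcount, Nat.nth_count hA]
  by_cases hB : B i
  · obtain ⟨hA', hcount⟩ := hW.up_matching_of_down hB
    rw [matching_of_up hA', hcount, Nat.nth_count hB]
  rw [matching_of_flat hA hB, matching_of_flat hA hB]

theorem matching_lt {i : ℕ} (hi : i < m) : matching A B i < m := by
  by_cases hA : A i
  · exact hW.lt_of_down _ (hW.down_matching_of_up hA).1
  · exact (hW.matching_le_of_not_up hA).trans_lt hi

theorem matching_eq_self_of_le {i : ℕ} (hi : m ≤ i) : matching A B i = i :=
  matching_of_flat (fun h => (hW.lt_of_up i h).not_ge hi) (fun h => (hW.lt_of_down i h).not_ge hi)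

theorem matching_lt_matching_of_up {i j : ℕ} (hi : A i) (hj : A j) (hij : i < j) :
    matching A B i < matching A B j := by
  rw [matching_of_up hi, matching_of_up hj]
  exact Nat.nth_lt_nth_of_lt_count (Nat.count_strict_mono hi hij)
    (hW.count_down_eq ▸ hW.count_up_lt hj)

/-- Flat steps lie on the axis, so no arc passes over them. -/
theorem matching_lt_matching_of_not_up {i j : ℕ} (hi : ¬ A i) (hj : ¬ A j) (hij : i < j) :
    matching A B i < matching A B j := by
  by_cases hBj : B j
  · have hk := hW.count_down_lt hBj
    rw [hW.matching_of_down hBj]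
    by_cases hBi : B i
    · rw [hW.matching_of_down hBi]
      exact Nat.nth_lt_nth_of_lt_count (Nat.count_strict_mono hBi hij) hk
    · rw [matching_of_flat hi hBi]
      have hflat := hW.count_eq_of_flat i (hij.trans (hW.lt_of_down j hBj)) hi hBi
      refine lt_of_le_of_ne (Nat.le_nth_of_count_le_of_lt_count hk ?_) fun heq => ?_
      · exact hflat ▸ Nat.count_monotone B hij.le
      · exact hi (heq ▸ Nat.nth_mem_of_lt_count hk)
  · rw [matching_of_flat hj hBj]
    exact (hW.matching_le_of_not_up hi).trans_lt hij

theorem avoidsDecreasingTriple_matching : AvoidsDecreasingTriple (matching A B) := by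
  intro p q r hpq hqr ⟨hrq, hqp⟩
  by_cases hp : A p <;> by_cases hq : A q <;> by_cases hr : A r
  · exact (hW.matching_lt_matching_of_up hp hq hpq).not_gt hqp
  · exact (hW.matching_lt_matching_of_up hp hq hpq).not_gt hqp
  · exact (hW.matching_lt_matching_of_up hp hr (hpq.trans hqr)).not_gt (hrq.trans hqp)
  · exact (hW.matching_lt_matching_of_not_up hq hr hqr).not_gt hrq
  · exact (hW.matching_lt_matching_of_up hq hr hqr).not_gt hrq
  · exact (hW.matching_lt_matching_of_not_up hp hr (hpq.trans hqr)).not_gt (hrq.trans hqp)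
  · exact (hW.matching_lt_matching_of_not_up hp hq hpq).not_gt hqp
  · exact (hW.matching_lt_matching_of_not_up hp hq hpq).not_gt hqp

theorem matching_succ_lt_iff {i : ℕ} :
    matching A B (i + 1) < matching A B i ↔ A i ∧ ¬ A (i + 1) := by
  constructor
  · intro hdesc
    by_cases hA : A i <;> by_cases hA' : A (i + 1)
    · exact absurd hdesc (hW.matching_lt_matching_of_up hA hA' i.lt_succ_self).not_gt
    · exact ⟨hA, hA'⟩
    · exact absurd hdesc ((hW.matching_le_of_not_up hA).trans_lt
        (i.lt_succ_self.trans (hW.lt_matching_of_up hA'))).not_gt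
    · exact absurd hdesc (hW.matching_lt_matching_of_not_up hA hA' i.lt_succ_self).not_gt
  · rintro ⟨hA, hA'⟩
    refine lt_of_le_of_ne ((hW.matching_le_of_not_up hA').trans (hW.lt_matching_of_up hA))
      fun heq => ?_
    have := congrArg (matching A B) heq
    rw [hW.matching_involutive, hW.matching_involutive] at this
    omega

theorem matching_reflect_of_up (hsymm : ∀ j < m, B j ↔ A (m - 1 - j)) {i : ℕ} (hA : A i) :
    matching A B (m - 1 - i) = m - 1 - matching A B i := by
  have hsymm' : ∀ j < m, A j ↔ B (m - 1 - j) := fun j hj => by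
    rw [hsymm _ (by omega), show m - 1 - (m - 1 - j) = j by omega]
  obtain ⟨hB, hcount⟩ := hW.down_matching_of_up hA
  set j := matching A B i
  have hi := hW.lt_of_up i hA
  have hj := hW.lt_of_down j hB
  have hleft := Nat.count_add_count_reflect hsymm (m - 1 - i) (by omega)
  have hright := Nat.count_add_count_reflect hsymm' (m - 1 - j) (by omega)
  rw [show m - (m - 1 - i) = i + 1 by omega, Nat.count_succ, if_pos hA] at hleft
  rw [show m - (m - 1 - j) = j + 1 by omega, Nat.count_succ, if_pos hB, hW.count_down_eq] at hright
  rw [hW.matching_of_down ((hsymm' i hi).mp hA),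
    show Nat.count B (m - 1 - i) = Nat.count A (m - 1 - j) by omega,
    Nat.nth_count ((hsymm j hj).mp hB)]

theorem matching_reflect (hsymm : ∀ j < m, B j ↔ A (m - 1 - j)) {i : ℕ} (hi : i < m) :
    matching A B (m - 1 - i) = m - 1 - matching A B i := by
  have hreflect : m - 1 - (m - 1 - i) = i := by omega
  by_cases hA : A i
  · exact hW.matching_reflect_of_up hsymm hA
  by_cases hB : B i
  · have := hW.matching_reflect_of_up hsymm ((hsymm i hi).mp hB)
    rw [hreflect] at this
    have := hW.matching_lt (i := m - 1 - i) (by omega)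
    omega
  · have hA' : ¬ A (m - 1 - i) := fun h => hB ((hsymm i hi).mpr h)
    have hB' : ¬ B (m - 1 - i) := fun h => hA (hreflect ▸ (hsymm _ (by omega)).mp h)
    rw [matching_of_flat hA hB, matching_of_flat hA' hB']

end IsMotzkinWord

theorem down_iff_of_greedy {A B A' B' : ℕ → Prop} [DecidablePred A] [DecidablePred B]
    [DecidablePred A'] [DecidablePred B'] {n : ℕ} (hA : ∀ i < n, A i ↔ A' i)
    (hB : ∀ i < n, B i ↔ ¬ A i ∧ Nat.count B i < Nat.count A i)
    (hB' : ∀ i < n, B' i ↔ ¬ A' i ∧ Nat.count B' i < Nat.count A' i) :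
    ∀ i < n, B i ↔ B' i := by
  induction n with
  | zero => intro i hi; omega
  | succ n ih =>
    have ih := ih (fun i hi => hA i (by omega)) (fun i hi => hB i (by omega))
      (fun i hi => hB' i (by omega))
    intro i hi
    rcases Nat.lt_succ_iff_lt_or_eq.mp hi with hi | rfl
    · exact ih i hi
    rw [hB i hi, hB' i hi, hA i hi, Nat.count_congr_of_lt ih,
      Nat.count_congr_of_lt fun j hj => hA j (by omega)]

section Involution

variable {g : ℕ → ℕ} (hg : Function.Involutive g) (hav : AvoidsDecreasingTriple g)
include hg hav

/-- The arcs `i ↦ g i` of a 321-avoiding involution do not nest, so the `k`-th excedance is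
matched with the `k`-th deficiency. -/
theorem count_excedance_eq_count_deficiency {i : ℕ} (hi : i < g i) :
    Nat.count (fun x => x < g x) i = Nat.count (fun y => g y < y) (g i) := by
  refine Nat.count_eq_count_of_involutive hg (fun x hx hxg => ⟨?_, by rwa [hg x]⟩)
    (fun y hy hyg => ⟨?_, by rwa [hg y]⟩)
  · refine lt_of_le_of_ne (not_lt.mp fun hlt => hav hx (hi.trans hlt) ⟨?_, hlt⟩) fun heq => ?_
    · rw [hg x]; omega
    · exact hx.ne (hg.injective heq)
  · refine lt_of_le_of_ne (not_lt.mp fun hlt => hav hlt hyg ⟨?_, ?_⟩) fun heq => ?_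
    · rwa [hg y]
    · rwa [hg y]
    · rw [← heq, hg y] at hy; exact hy.false

theorem count_excedance_eq_count_deficiency_of_fixed {i : ℕ} (hi : g i = i) :
    Nat.count (fun x => x < g x) i = Nat.count (fun y => g y < y) i := by
  refine Nat.count_eq_count_of_involutive hg (fun x hx hxg => ⟨?_, by rwa [hg x]⟩)
    (fun y hy hyg => ⟨hyg.trans hy, by rwa [hg y]⟩)
  refine lt_of_le_of_ne (not_lt.mp fun hlt => hav hx hlt ⟨?_, ?_⟩) fun heq => ?_
  · rw [hg x, hi]; exact hx
  · rwa [hi]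
  · rw [← hi] at heq; exact hx.ne (hg.injective heq)

theorem count_deficiency_lt_count_excedance {i : ℕ} (hi : g i < i) :
    Nat.count (fun y => g y < y) i < Nat.count (fun x => x < g x) i := by
  have hgi : g i < g (g i) := by rwa [hg i]
  rw [← hg i, ← count_excedance_eq_count_deficiency hg hav hgi, hg i]
  exact Nat.count_strict_mono hgi hi

theorem apply_lt_self_iff_count_lt {i : ℕ} :
    g i < i ↔ ¬ i < g i ∧ Nat.count (fun y => g y < y) i < Nat.count (fun x => x < g x) i := by
  refine ⟨fun hi => ⟨by omega, count_deficiency_lt_count_excedance hg hav hi⟩,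
    fun ⟨hi, hlt⟩ => ?_⟩
  refine lt_of_le_of_ne (not_lt.mp hi) fun heq => ?_
  rw [count_excedance_eq_count_deficiency_of_fixed hg hav heq] at hlt
  exact hlt.false

theorem eq_matching_excedance_deficiency :
    g = matching (fun x => x < g x) (fun y => g y < y) := by
  funext i
  rcases lt_trichotomy i (g i) with hi | hi | hi
  · have hdef : g (g i) < g i := by rwa [hg i]
    rw [matching_of_up (A := fun x => x < g x) (B := fun y => g y < y) hi,
      count_excedance_eq_count_deficiency hg hav hi, Nat.nth_count (p := fun y => g y < y) hdef]
  · rw [matching_of_flat (A := fun x => x < g x) (B := fun y => g y < y) (by omega) (by omega),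
      ← hi]
  · have hexc : g i < g (g i) := by rwa [hg i]
    have hcount := count_excedance_eq_count_deficiency hg hav hexc
    rw [hg i] at hcount
    rw [matching_of_not_up_of_down (A := fun x => x < g x) (B := fun y => g y < y) (by omega) hi,
      ← hcount, Nat.nth_count (p := fun x => x < g x) hexc]

end Involution

/-- The height, before step `i`, of the path that goes up at the steps in `T` and down at the
others; the truncated subtraction keeps it on the axis (a flat step) where it cannot go down. -/
def level (T : Finset ℕ) : ℕ → ℕ
  | 0 => 0
  | i + 1 => if i ∈ T then level T i + 1 else level T i - 1

/-- The up steps of the word of length `2 * n` whose first half is the path of `level T` and whose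
second half is the mirror image of the first, with up and down steps exchanged. -/
def upSteps (n : ℕ) (T : Finset ℕ) (i : ℕ) : Prop :=
  if i < n then i ∈ T else i < 2 * n ∧ 2 * n - 1 - i ∉ T ∧ 0 < level T (2 * n - 1 - i)

def downSteps (n : ℕ) (T : Finset ℕ) (i : ℕ) : Prop :=
  if i < n then i ∉ T ∧ 0 < level T i else i < 2 * n ∧ 2 * n - 1 - i ∈ T

section Steps

variable (n : ℕ) (T : Finset ℕ)

theorem upSteps_of_lt {i : ℕ} (hi : i < n) : upSteps n T i ↔ i ∈ T := by
  rw [upSteps, if_pos hi]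

theorem downSteps_of_lt {i : ℕ} (hi : i < n) : downSteps n T i ↔ i ∉ T ∧ 0 < level T i := by
  rw [downSteps, if_pos hi]

theorem downSteps_iff_upSteps_reflect {j : ℕ} (hj : j < 2 * n) :
    downSteps n T j ↔ upSteps n T (2 * n - 1 - j) := by
  unfold upSteps downSteps
  by_cases h : j < n
  · rw [if_pos h, if_neg (by omega), show 2 * n - 1 - (2 * n - 1 - j) = j by omega]
    exact ⟨fun hd => ⟨by omega, hd⟩, And.right⟩
  · rw [if_neg h, if_pos (by omega)]
    exact ⟨And.right, fun hu => ⟨hj, hu⟩⟩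

theorem upSteps_iff_downSteps_reflect {j : ℕ} (hj : j < 2 * n) :
    upSteps n T j ↔ downSteps n T (2 * n - 1 - j) := by
  rw [downSteps_iff_upSteps_reflect n T (by omega), show 2 * n - 1 - (2 * n - 1 - j) = j by omega]

theorem count_upSteps_eq_count_downSteps_add_level :
    ∀ i ≤ n, Nat.count (upSteps n T) i = Nat.count (downSteps n T) i + level T i
  | 0, _ => by simp [level]
  | i + 1, hi => by
    have ih := count_upSteps_eq_count_downSteps_add_level i (by omega)
    rw [Nat.count_succ, Nat.count_succ, level, upSteps_of_lt n T (by omega),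
      downSteps_of_lt n T (by omega)]
    by_cases hT : i ∈ T
    · simp only [hT, if_true, not_true_eq_false, false_and, if_false]
      omega
    · by_cases hl : 0 < level T i <;> simp [hT, hl] <;> omega

theorem level_succ_eq_zero {i : ℕ} (hi : i ∉ T) (hl : level T i = 0) : level T (i + 1) = 0 := by
  rw [level, if_neg hi, hl]

theorem count_downSteps_add_count_upSteps {t : ℕ} (ht : t ≤ 2 * n) :
    Nat.count (downSteps n T) t + Nat.count (upSteps n T) (2 * n - t) =
      Nat.count (upSteps n T) (2 * n) :=
  Nat.count_add_count_reflect (fun _ hj => downSteps_iff_upSteps_reflect n T hj) t ht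

theorem count_upSteps_add_count_downSteps {t : ℕ} (ht : t ≤ 2 * n) :
    Nat.count (upSteps n T) t + Nat.count (downSteps n T) (2 * n - t) =
      Nat.count (downSteps n T) (2 * n) :=
  Nat.count_add_count_reflect (fun _ hj => upSteps_iff_downSteps_reflect n T hj) t ht

theorem count_downSteps_eq_count_upSteps :
    Nat.count (downSteps n T) (2 * n) = Nat.count (upSteps n T) (2 * n) := by
  simpa using count_downSteps_add_count_upSteps n T le_rfl

theorem count_downSteps_le {i : ℕ} (hi : i ≤ 2 * n) :
    Nat.count (downSteps n T) i ≤ Nat.count (upSteps n T) i := by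
  by_cases hin : i ≤ n
  · have := count_upSteps_eq_count_downSteps_add_level n T i hin
    omega
  · have := count_upSteps_eq_count_downSteps_add_level n T (2 * n - i) (by omega)
    have := count_downSteps_add_count_upSteps n T hi
    have := count_upSteps_add_count_downSteps n T hi
    have := count_downSteps_eq_count_upSteps n T
    omega

theorem count_upSteps_eq_of_flat {i : ℕ} (hi : i < 2 * n) (hu : ¬ upSteps n T i)
    (hd : ¬ downSteps n T i) : Nat.count (upSteps n T) i = Nat.count (downSteps n T) i := by
  by_cases hin : i < n
  · rw [upSteps_of_lt n T hin] at hu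
    rw [downSteps_of_lt n T hin] at hd
    have := count_upSteps_eq_count_downSteps_add_level n T i hin.le
    have : level T i = 0 := Nat.eq_zero_of_not_pos fun h => hd ⟨hu, h⟩
    omega
  · rw [upSteps_iff_downSteps_reflect n T hi, downSteps_of_lt n T (by omega)] at hu
    rw [downSteps_iff_upSteps_reflect n T hi, upSteps_of_lt n T (by omega)] at hd
    have := level_succ_eq_zero T hd (Nat.eq_zero_of_not_pos fun h => hu ⟨hd, h⟩)
    have := count_upSteps_eq_count_downSteps_add_level n T (2 * n - 1 - i + 1) (by omega)
    have := count_downSteps_add_count_upSteps n T hi.le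
    have := count_upSteps_add_count_downSteps n T hi.le
    have := count_downSteps_eq_count_upSteps n T
    rw [show 2 * n - i = 2 * n - 1 - i + 1 by omega] at *
    omega

theorem isMotzkinWord_steps : IsMotzkinWord (upSteps n T) (downSteps n T) (2 * n) := by
  refine ⟨fun i hu hd => ?_, fun i hu => ?_, fun i hd => ?_, fun _ => count_downSteps_le n T,
    count_downSteps_eq_count_upSteps n T, fun _ => count_upSteps_eq_of_flat n T⟩
  · unfold upSteps at hu
    unfold downSteps at hd
    split_ifs at hu hd
    · exact hd.1 hu
    · exact hu.2.1 hd.2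
  · unfold upSteps at hu; split_ifs at hu <;> omega
  · unfold downSteps at hd; split_ifs at hd <;> omega

theorem downSteps_iff_of_lt {i : ℕ} (hi : i < n) :
    downSteps n T i ↔
      ¬ upSteps n T i ∧ Nat.count (downSteps n T) i < Nat.count (upSteps n T) i := by
  rw [downSteps_of_lt n T hi, upSteps_of_lt n T hi,
    count_upSteps_eq_count_downSteps_add_level n T i hi.le, lt_add_iff_pos_right]

end Steps

namespace Equiv.Perm

variable {m : ℕ} (π : Perm (Fin m))

/-- Positions are 0-based here, unlike in `pval`. -/
def extendNat (i : ℕ) : ℕ := if h : i < m then π ⟨i, h⟩ else i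

theorem extendNat_of_lt {i : ℕ} (hi : i < m) : π.extendNat i = π ⟨i, hi⟩ := dif_pos hi

theorem extendNat_of_le {i : ℕ} (hi : m ≤ i) : π.extendNat i = i := dif_neg (by omega)

theorem extendNat_lt {i : ℕ} (hi : i < m) : π.extendNat i < m := by
  rw [extendNat_of_lt π hi]; exact Fin.isLt _

theorem extendNat_fin (x : Fin m) : π.extendNat x = π x := extendNat_of_lt π x.isLt

theorem pval_succ {i : ℕ} (hi : i < m) : pval π (i + 1) = π.extendNat i + 1 := by
  rw [pval, dif_pos (by omega), extendNat_of_lt π hi]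
  rfl

theorem extendNat_injective : Function.Injective (extendNat : Perm (Fin m) → ℕ → ℕ) :=
  fun π σ h => Equiv.ext fun x => Fin.ext (by rw [← extendNat_fin, ← extendNat_fin, h])

theorem involutive_extendNat (h : Function.Involutive π) : Function.Involutive π.extendNat := by
  intro i
  by_cases hi : i < m
  · rw [extendNat_of_lt π hi, extendNat_fin, h]
  · rw [extendNat_of_le π (not_lt.mp hi), extendNat_of_le π (not_lt.mp hi)]

theorem avoids321_iff : Avoids321 π ↔ AvoidsDecreasingTriple π.extendNat := by
  constructor
  · intro hπ p q r hpq hqr ⟨hrq, hqp⟩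
    have hr : r < m := by
      by_contra hr
      rw [extendNat_of_le π (by omega)] at hrq
      by_cases hq : q < m
      · have := π.extendNat_lt hq; omega
      · rw [extendNat_of_le π (by omega)] at hrq; omega
    rw [extendNat_of_lt π hr, extendNat_of_lt π (by omega)] at hrq
    rw [extendNat_of_lt π (by omega), extendNat_of_lt π (by omega)] at hqp
    exact hπ ⟨⟨p, by omega⟩, ⟨q, by omega⟩, ⟨r, hr⟩, hpq, hqr, hrq, hqp⟩
  · rintro hπ ⟨i, j, k, hij, hjk, hkj, hji⟩
    refine hπ (Fin.lt_def.mp hij) (Fin.lt_def.mp hjk) ⟨?_, ?_⟩ <;>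
      simpa only [extendNat_fin, Fin.lt_def] using ‹_›

theorem centro_iff :
    Centro π ↔ ∀ i < m, π.extendNat (m - 1 - i) = m - 1 - π.extendNat i := by
  constructor
  · intro hπ i hi
    have := hπ (i + 1) (mem_Icc.mpr ⟨by omega, by omega⟩)
    rw [pval_succ π hi, show m + 1 - (i + 1) = m - 1 - i + 1 by omega, pval_succ π (by omega)]
      at this
    have := π.extendNat_lt hi
    omega
  · intro hπ i hi
    obtain ⟨hi1, him⟩ := mem_Icc.mp hi
    have := hπ (i - 1) (by omega)
    have := π.extendNat_lt (i := i - 1) (by omega)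
    rw [show i = i - 1 + 1 by omega, pval_succ π (by omega),
      show m + 1 - (i - 1 + 1) = m - 1 - (i - 1) + 1 by omega, pval_succ π (by omega)]
    omega

theorem lt_extendNat_iff_reflect (hπ : Centro π) {i : ℕ} (hi : i < m) :
    i < π.extendNat i ↔ π.extendNat (m - 1 - i) < m - 1 - i := by
  have := π.extendNat_lt hi
  rw [π.centro_iff.mp hπ i hi]
  omega

theorem card_filter_desSet_le (k : ℕ) :
    #((DesSet π).filter (· ≤ k)) =
      #((range k).filter fun i => π.extendNat (i + 1) < π.extendNat i) := by
  symm
  refine card_nbij' (· + 1) (· - 1) (fun i hi => ?_) (fun i hi => ?_) (fun i _ => rfl)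
    (fun i hi => ?_) <;>
    simp only [DesSet, coe_filter, mem_filter, mem_range, mem_Ico, Set.mem_ofPred_eq] at hi ⊢
  · have him : i + 1 < m := by
      by_contra him
      rw [extendNat_of_le π (by omega)] at hi
      by_cases hi' : i < m
      · have := π.extendNat_lt hi'; omega
      · rw [extendNat_of_le π (by omega)] at hi; omega
    rw [pval_succ π him, pval_succ π (by omega)]
    omega
  · rw [show i = i - 1 + 1 by omega, pval_succ π (by omega), pval_succ π (by omega)] at hi
    omega
  · omega

end Equiv.Perm

namespace IsMotzkinWord

variable {A B : ℕ → Prop} [DecidablePred A] [DecidablePred B] {m : ℕ}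
  (hW : IsMotzkinWord A B m)

noncomputable def toPerm : Equiv.Perm (Fin m) :=
  Function.Involutive.toPerm (fun x => ⟨matching A B x, hW.matching_lt x.isLt⟩) fun x =>
    Fin.ext (hW.matching_involutive x)

theorem involutive_toPerm : Function.Involutive hW.toPerm :=
  fun x => Fin.ext (hW.matching_involutive x)

theorem extendNat_toPerm : hW.toPerm.extendNat = matching A B := by
  funext i
  by_cases hi : i < m
  · rw [Equiv.Perm.extendNat_of_lt _ hi]; rfl
  · rw [Equiv.Perm.extendNat_of_le _ (by omega), hW.matching_eq_self_of_le (by omega)]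

end IsMotzkinWord

def numBlocks (T : Finset ℕ) : ℕ := #(T.filter fun i => i + 1 ∉ T)

theorem numBlocks_insert_succ {n : ℕ} {T : Finset ℕ} (hT : T ⊆ range (n + 1)) :
    numBlocks (insert (n + 1) T) = numBlocks T + if n ∈ T then 0 else 1 := by
  have hbound : ∀ i ∈ T, i ≤ n := fun i hi => Nat.lt_succ_iff.mp (mem_range.mp (hT hi))
  have hfilter : (insert (n + 1) T).filter (fun i => i + 1 ∉ insert (n + 1) T) =
      insert (n + 1) ((T.filter fun i => i + 1 ∉ T).erase n) := by
    ext i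
    simp only [mem_filter, mem_insert, mem_erase]
    constructor
    · rintro ⟨rfl | hi, hi'⟩
      · exact Or.inl rfl
      · exact Or.inr ⟨by omega, hi, by tauto⟩
    · rintro (rfl | ⟨hne, hi, hi'⟩)
      · exact ⟨Or.inl rfl, fun h => by have := hbound _ (h.resolve_left (by omega)); omega⟩
      · exact ⟨Or.inr hi, fun h => h.elim (fun h => hne (by omega)) hi'⟩
  have hnotin : n + 1 ∉ (T.filter fun i => i + 1 ∉ T).erase n :=
    fun h => by have := hbound _ (mem_filter.mp (mem_of_mem_erase h)).1; omega
  have hmem : n ∈ T.filter (fun i => i + 1 ∉ T) ↔ n ∈ T :=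
    ⟨fun h => (mem_filter.mp h).1, fun h => mem_filter.mpr ⟨h, fun h' => by
      have := hbound _ h'; omega⟩⟩
  rw [numBlocks, numBlocks, hfilter, card_insert_of_notMem hnotin, card_erase_eq_ite]
  by_cases hn : n ∈ T
  · have := card_pos.mpr ⟨n, hmem.mpr hn⟩
    rw [if_pos (hmem.mpr hn), if_pos hn]
    omega
  · rw [if_neg (mt hmem.mp hn), if_neg hn]

section BlockCount

variable {R : Type*} [CommRing R] (q : R)

def sumChooseEven (m : ℕ) : R := ∑ k ∈ range (m + 1), (m.choose (2 * k) : R) * q ^ k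

def sumChooseOdd (m : ℕ) : R := ∑ k ∈ range (m + 1), (m.choose (2 * k + 1) : R) * q ^ (k + 1)

theorem sumChooseOdd_succ (m : ℕ) :
    sumChooseOdd q (m + 1) = q * sumChooseEven q m + sumChooseOdd q m := by
  rw [sumChooseOdd, sum_range_succ, Nat.choose_eq_zero_of_lt (by omega), Nat.cast_zero, zero_mul,
    add_zero, sumChooseEven, sumChooseOdd, mul_sum, ← sum_add_distrib]
  refine sum_congr rfl fun k _ => ?_
  rw [Nat.choose_succ_succ', Nat.cast_add]
  ring

theorem sumChooseEven_eq_sum_add_one (m : ℕ) :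
    sumChooseEven q m =
      ∑ k ∈ range (m + 1), (m.choose (2 * (k + 1)) : R) * q ^ (k + 1) + 1 := by
  rw [sumChooseEven, sum_range_succ', sum_range_succ (fun k => (m.choose (2 * (k + 1)) : R) * _) m,
    Nat.choose_eq_zero_of_lt (show m < 2 * (m + 1) by omega)]
  simp

theorem sumChooseEven_succ (m : ℕ) :
    sumChooseEven q (m + 1) = sumChooseEven q m + sumChooseOdd q m := by
  rw [sumChooseEven_eq_sum_add_one, sumChooseEven_eq_sum_add_one, sumChooseOdd,
    sum_range_succ _ (m + 1), Nat.choose_eq_zero_of_lt (by omega), Nat.cast_zero, zero_mul,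
    add_zero]
  simp only [Nat.choose_succ_succ', Nat.cast_add, add_mul, sum_add_distrib, mul_add]
  ring

theorem sum_pow_numBlocks_and_insert (n : ℕ) :
    ∑ T ∈ (range n).powerset, q ^ numBlocks T = sumChooseEven q (n + 1) ∧
      ∑ T ∈ (range n).powerset, q ^ numBlocks (insert n T) = sumChooseOdd q (n + 1) := by
  induction n with
  | zero => simp [numBlocks, sumChooseEven, sumChooseOdd, sum_range_succ, Nat.choose_eq_zero_of_lt]
  | succ n ih =>
    constructor
    · rw [range_add_one, sum_powerset_insert notMem_range_self, ih.1, ih.2]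
      exact (sumChooseEven_succ q (n + 1)).symm
    rw [sumChooseOdd_succ, ← ih.1, ← ih.2, mul_sum, range_add_one,
      sum_powerset_insert notMem_range_self]
    congr 1 <;> refine sum_congr rfl fun T hT => ?_
    · have hT := mem_powerset.mp hT
      rw [numBlocks_insert_succ (hT.trans (range_subset_range.mpr n.le_succ)),
        if_neg fun h => notMem_range_self (hT h), pow_succ, mul_comm]
    · have hT := insert_subset_iff.mpr ⟨mem_range_succ_iff.mpr le_rfl,
        (mem_powerset.mp hT).trans (range_subset_range.mpr n.le_succ)⟩
      rw [numBlocks_insert_succ hT, if_pos (mem_insert_self n T), add_zero]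

end BlockCount

section CentroPerm

variable {n : ℕ} {T : Finset ℕ}

/-- The 321-avoiding centrosymmetric involution of `Fin (2 * n)` whose excedances in the first
half are the elements of `T ⊆ range n`. -/
noncomputable def centroPerm (n : ℕ) (T : Finset ℕ) : Equiv.Perm (Fin (2 * n)) :=
  (isMotzkinWord_steps n T).toPerm

def lowerExcedances (n : ℕ) (π : Equiv.Perm (Fin (2 * n))) : Finset ℕ :=
  (range n).filter fun i => i < π.extendNat i

theorem lowerExcedances_subset {π : Equiv.Perm (Fin (2 * n))} : lowerExcedances n π ⊆ range n :=
  filter_subset _ _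

theorem lt_extendNat_iff_upSteps_of_lt {π : Equiv.Perm (Fin (2 * n))} {i : ℕ} (hi : i < n) :
    i < π.extendNat i ↔ upSteps n (lowerExcedances n π) i := by
  rw [upSteps_of_lt _ _ hi, lowerExcedances, mem_filter, mem_range]
  exact ⟨fun h => ⟨hi, h⟩, And.right⟩

theorem extendNat_centroPerm :
    (centroPerm n T).extendNat = matching (upSteps n T) (downSteps n T) :=
  (isMotzkinWord_steps n T).extendNat_toPerm

theorem centroPerm_mem_ICset : centroPerm n T ∈ ICset n := by
  refine mem_filter.mpr ⟨mem_univ _, (isMotzkinWord_steps n T).involutive_toPerm, ?_, ?_⟩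
  · rw [Equiv.Perm.centro_iff, extendNat_centroPerm]
    exact fun i hi => (isMotzkinWord_steps n T).matching_reflect
      (fun j hj => downSteps_iff_upSteps_reflect n T hj) hi
  · rw [Equiv.Perm.avoids321_iff, extendNat_centroPerm]
    exact (isMotzkinWord_steps n T).avoidsDecreasingTriple_matching

theorem lowerExcedances_centroPerm (hT : T ⊆ range n) :
    lowerExcedances n (centroPerm n T) = T := by
  ext i
  rw [lowerExcedances, mem_filter, mem_range, extendNat_centroPerm,
    (isMotzkinWord_steps n T).lt_matching_iff]
  exact ⟨fun ⟨hi, hu⟩ => (upSteps_of_lt n T hi).mp hu,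
    fun hi => ⟨mem_range.mp (hT hi), (upSteps_of_lt n T (mem_range.mp (hT hi))).mpr hi⟩⟩

theorem card_desPlus_centroPerm (hT : T ⊆ range n) :
    #((DesSet (centroPerm n T)).filter (· ≤ n)) = numBlocks T := by
  rw [Equiv.Perm.card_filter_desSet_le, extendNat_centroPerm, numBlocks]
  congr 1
  ext i
  simp only [mem_filter, mem_range, (isMotzkinWord_steps n T).matching_succ_lt_iff]
  constructor
  · rintro ⟨hi, hu, hu'⟩
    refine ⟨(upSteps_of_lt n T hi).mp hu, fun hT' => hu' ?_⟩
    exact (upSteps_of_lt n T (mem_range.mp (hT hT'))).mpr hT'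
  · rintro ⟨hiT, hi'⟩
    have hi := mem_range.mp (hT hiT)
    refine ⟨hi, (upSteps_of_lt n T hi).mpr hiT, fun hu => ?_⟩
    rcases Nat.lt_or_ge (i + 1) n with hlt | hge
    · exact hi' ((upSteps_of_lt n T hlt).mp hu)
    · rw [upSteps, if_neg (by omega), show 2 * n - 1 - (i + 1) = i by omega] at hu
      exact hu.2.1 hiT

section ICset

variable {π : Equiv.Perm (Fin (2 * n))} (hπ : π ∈ ICset n)
include hπ

theorem extendNat_lt_iff_downSteps_of_lt {i : ℕ} (hi : i < n) :
    π.extendNat i < i ↔ downSteps n (lowerExcedances n π) i := by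
  obtain ⟨-, hinv, -, havoid⟩ := mem_filter.mp hπ
  exact down_iff_of_greedy (fun j hj => lt_extendNat_iff_upSteps_of_lt hj)
    (fun _ _ => apply_lt_self_iff_count_lt (π.involutive_extendNat hinv) (π.avoids321_iff.mp havoid))
    (fun _ hj => downSteps_iff_of_lt n _ hj) i hi

theorem lt_extendNat_iff_upSteps (i : ℕ) :
    i < π.extendNat i ↔ upSteps n (lowerExcedances n π) i := by
  by_cases hi : i < n
  · exact lt_extendNat_iff_upSteps_of_lt hi
  by_cases hi' : i < 2 * n
  · rw [π.lt_extendNat_iff_reflect (mem_filter.mp hπ).2.2.1 hi',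
      extendNat_lt_iff_downSteps_of_lt hπ (by omega), upSteps_iff_downSteps_reflect n _ hi']
  · rw [π.extendNat_of_le (by omega)]
    exact ⟨fun h => absurd h (lt_irrefl i),
      fun h => absurd ((isMotzkinWord_steps n _).lt_of_up i h) hi'⟩

theorem extendNat_lt_iff_downSteps (i : ℕ) :
    π.extendNat i < i ↔ downSteps n (lowerExcedances n π) i := by
  by_cases hi : i < n
  · exact extendNat_lt_iff_downSteps_of_lt hπ hi
  by_cases hi' : i < 2 * n
  · have := π.lt_extendNat_iff_reflect (mem_filter.mp hπ).2.2.1 (i := 2 * n - 1 - i) (by omega)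
    rw [show 2 * n - 1 - (2 * n - 1 - i) = i by omega] at this
    rw [← this, lt_extendNat_iff_upSteps_of_lt (by omega), downSteps_iff_upSteps_reflect n _ hi']
  · rw [π.extendNat_of_le (by omega)]
    exact ⟨fun h => absurd h (lt_irrefl i),
      fun h => absurd ((isMotzkinWord_steps n _).lt_of_down i h) hi'⟩

theorem centroPerm_lowerExcedances : centroPerm n (lowerExcedances n π) = π := by
  obtain ⟨-, hinv, -, havoid⟩ := mem_filter.mp hπ
  apply Equiv.Perm.extendNat_injective
  rw [extendNat_centroPerm, eq_matching_excedance_deficiency (π.involutive_extendNat hinv)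
    (π.avoids321_iff.mp havoid)]
  exact matching_congr (fun i => (lt_extendNat_iff_upSteps hπ i).symm)
    (fun i => (extendNat_lt_iff_downSteps hπ i).symm)

end ICset

end CentroPerm

/-- `∑_{π ∈ I^C_{2n}(321)} q^{des^+(π)} = ∑_{k ≥ 0} C(n+1, 2k) q^k`. -/
theorem desPlus_generating_polynomial (n : ℕ) (R : Type*) [CommRing R] (q : R) :
    ∑ π ∈ ICset n, q ^ ((DesSet π).filter (· ≤ n)).card =
      ∑ k ∈ Finset.range (n + 2), ((n + 1).choose (2 * k) : R) * q ^ k := by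
  change _ = sumChooseEven q (n + 1)
  rw [← (sum_pow_numBlocks_and_insert q n).1]
  refine sum_nbij' (lowerExcedances n) (centroPerm n)
    (fun π _ => mem_coe.mpr (mem_powerset.mpr lowerExcedances_subset))
    (fun T _ => centroPerm_mem_ICset) (fun π hπ => centroPerm_lowerExcedances hπ)
    (fun T hT => lowerExcedances_centroPerm (mem_powerset.mp hT)) fun π hπ => ?_
  rw [← card_desPlus_centroPerm lowerExcedances_subset, centroPerm_lowerExcedances hπ]
end

section
/- For every centrosymmetric permutation π of S_m and every 1 ≤ i < m, position i is a descent of π if and only if position m - i is a descent of π. Consequently maj(π) = m · des(π) / 2. -/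
open Finset Polynomial
open scoped Classical

theorem Finset.two_mul_sum_eq_mul_card_of_sub_mem {S : Finset ℕ} {m : ℕ}
    (hS : ∀ i ∈ S, i ≤ m ∧ m - i ∈ S) : 2 * ∑ i ∈ S, i = m * S.card := by
  have reflect : ∑ i ∈ S, (m - i) = ∑ i ∈ S, i :=
    Finset.sum_nbij' (m - ·) (m - ·) (fun i hi => (hS i hi).2) (fun i hi => (hS i hi).2)
      (fun i hi => Nat.sub_sub_self (hS i hi).1) (fun i hi => Nat.sub_sub_self (hS i hi).1)
      (fun _ _ => rfl)
  calc 2 * ∑ i ∈ S, i = ∑ i ∈ S, (i + (m - i)) := by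
        rw [Finset.sum_add_distrib, reflect, two_mul]
    _ = ∑ _i ∈ S, m := Finset.sum_congr rfl fun i hi => Nat.add_sub_cancel' (hS i hi).1
    _ = m * S.card := by rw [Finset.sum_const, smul_eq_mul, mul_comm]

theorem mem_desSet_iff {m : ℕ} {π : Equiv.Perm (Fin m)} {i : ℕ} :
    i ∈ DesSet π ↔ 1 ≤ i ∧ i < m ∧ pval π (i + 1) < pval π i := by
  simp only [DesSet, Finset.mem_filter, Finset.mem_Ico, and_assoc]

theorem Centro.mem_desSet_iff_sub_mem {m : ℕ} {π : Equiv.Perm (Fin m)} (h : Centro π) {i : ℕ}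
    (hi₁ : 1 ≤ i) (hi : i < m) : i ∈ DesSet π ↔ m - i ∈ DesSet π := by
  -- `j ↦ m + 1 - j` sends the pair of positions `(i, i + 1)` to `(m + 1 - i, m - i)`
  -- and reverses the order of the values there.
  have sym_i := h i (Finset.mem_Icc.2 ⟨hi₁, hi.le⟩)
  have sym_succ := h (i + 1) (Finset.mem_Icc.2 ⟨by omega, hi⟩)
  rw [show m + 1 - (i + 1) = m - i by omega] at sym_succ
  rw [mem_desSet_iff, mem_desSet_iff, show m - i + 1 = m + 1 - i by omega]
  omega

/-- For a centrosymmetric `π ∈ S_m`, `i` is a descent iff `m - i` is a descent;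
consequently `maj(π) = m · des(π) / 2`, i.e. `2 · maj(π) = m · des(π)`. -/
theorem centro_descent_symmetry (m : ℕ) (π : Equiv.Perm (Fin m)) (h : Centro π) :
    (∀ i, 1 ≤ i → i < m → (i ∈ DesSet π ↔ m - i ∈ DesSet π)) ∧
      2 * majStat π = m * desNum π := by
  refine ⟨fun _ => h.mem_desSet_iff_sub_mem, ?_⟩
  refine Finset.two_mul_sum_eq_mul_card_of_sub_mem fun i hi => ?_
  obtain ⟨hi₁, him, -⟩ := mem_desSet_iff.1 hi
  exact ⟨him.le, (h.mem_desSet_iff_sub_mem hi₁ him).1 hi⟩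
end

section
/- For each subset E of [n], define Des(E) = {i ∈ E : i+1 ∉ E} and maj(E) = ∑_{i ∈ Des(E)} i. Then the polynomials p_n(q) = ∑_{E ⊆ [n]} q^{maj(E)} satisfy the recurrence p_n(q) = (1+q) p_{n-1}(q) + (q^n - q) p_{n-2}(q) for n ≥ 2, with p_0(q) = 1 and p_1(q) = 1 + q. -/
/-!
Split the subsets `E ⊆ [n]` according to whether they contain `n` and `n - 1`. If `n ∉ E` nothing
changes. If `n ∈ E` and `n - 1 ∈ E`, the descent `n - 1` of `E \ {n}` moves up to `n`, so `maj`
grows by `1`; if `n ∈ E` but `n - 1 ∉ E`, then `n` is a new descent and `maj` grows by `n`.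
Hence `p_n = p_{n-1} + q (p_{n-1} - p_{n-2}) + q^n p_{n-2}`.
-/

open Finset Polynomial
open scoped Classical

/-- For `E ⊆ [n]`, `Des(E) = {i ∈ E : i+1 ∉ E}`. -/
def DesE (E : Finset ℕ) : Finset ℕ := E.filter (fun i => i + 1 ∉ E)

/-- `des(E) = |Des(E)|`. -/
def desE (E : Finset ℕ) : ℕ := (DesE E).card

/-- `maj(E) = ∑_{i ∈ Des(E)} i`. -/
def majE (E : Finset ℕ) : ℕ := ∑ i ∈ DesE E, i

section Descents

variable {m : ℕ} {E : Finset ℕ}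

lemma DesE_insert_succ (hE : ∀ j ∈ E, j ≤ m) :
    DesE (insert (m + 1) E) = insert (m + 1) ((DesE E).erase m) := by
  ext i
  simp only [DesE, mem_filter, mem_insert, mem_erase]
  constructor
  · rintro ⟨rfl | hi, hi'⟩
    · exact .inl rfl
    · exact .inr ⟨fun h => hi' (.inl (by omega)), hi, fun h => hi' (.inr h)⟩
  · rintro (rfl | ⟨hne, hi, hi'⟩)
    · refine ⟨.inl rfl, ?_⟩
      rintro (h | h)
      · omega
      · have := hE _ h; omega
    · refine ⟨.inr hi, ?_⟩
      rintro (h | h)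
      · omega
      · exact hi' h

lemma not_succ_mem_DesE (hE : ∀ j ∈ E, j ≤ m) : m + 1 ∉ (DesE E).erase m := fun h => by
  have := hE _ (mem_filter.mp (mem_of_mem_erase h)).1
  omega

lemma majE_insert_succ_of_mem (hE : ∀ j ∈ E, j ≤ m) (hm : m ∈ E) :
    majE (insert (m + 1) E) = majE E + 1 := by
  have hdes : m ∈ DesE E := mem_filter.mpr ⟨hm, fun h => by have := hE _ h; omega⟩
  rw [majE, DesE_insert_succ hE, sum_insert (not_succ_mem_DesE hE), majE,
    ← sum_erase_add _ _ hdes]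
  ring

lemma majE_insert_succ_of_notMem (hE : ∀ j ∈ E, j ≤ m) (hm : m ∉ E) :
    majE (insert (m + 1) E) = majE E + (m + 1) := by
  have hdes : m ∉ DesE E := fun h => hm (mem_filter.mp h).1
  rw [majE, DesE_insert_succ hE, sum_insert (not_succ_mem_DesE hE), erase_eq_of_notMem hdes,
    majE, add_comm]

end Descents

section MajSum

variable {R : Type*} [CommRing R] (q : R)

/-- `p_n(q)`. -/
def majSum (n : ℕ) : R := ∑ E ∈ (Icc 1 n).powerset, q ^ majE E

lemma majSum_zero : majSum q 0 = 1 := by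
  simp [majSum, majE, DesE]

lemma majSum_one : majSum q 1 = 1 + q := by
  rw [majSum, Icc_self, show ({1} : Finset ℕ).powerset = {∅, {1}} from rfl, sum_pair (by decide),
    show majE ∅ = 0 from rfl, show majE {1} = 1 by decide, pow_zero, pow_one]

lemma majSum_succ (m : ℕ) :
    majSum q (m + 1) = majSum q m + ∑ E ∈ (Icc 1 m).powerset, q ^ majE (insert (m + 1) E) := by
  rw [majSum, ← insert_Icc_right_eq_Icc_add_one (by omega),
    sum_powerset_insert (by simp), majSum]

lemma majSum_add_two (k : ℕ) :
    majSum q (k + 2) = (1 + q) * majSum q (k + 1) + (q ^ (k + 2) - q) * majSum q k := by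
  have hbound : ∀ {j E}, E ∈ (Icc 1 j).powerset → ∀ i ∈ E, i ≤ j := fun hE i hi =>
    (mem_Icc.mp (mem_powerset.mp hE hi)).2
  have hnew_descent : ∑ E ∈ (Icc 1 k).powerset, q ^ majE (insert (k + 2) E) = q ^ (k + 2) * majSum q k := by
    rw [majSum, mul_sum]
    refine sum_congr rfl fun E hE => ?_
    rw [majE_insert_succ_of_notMem (fun i hi => (hbound hE i hi).trans k.le_succ)
      (fun h => by have := hbound hE _ h; omega), pow_add, mul_comm]
  have hshifted_descent : ∑ E ∈ (Icc 1 k).powerset, q ^ majE (insert (k + 2) (insert (k + 1) E)) =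
      q * (majSum q (k + 1) - majSum q k) := by
    rw [majSum_succ q k, add_sub_cancel_left, mul_sum]
    refine sum_congr rfl fun E hE => ?_
    have hle : ∀ i ∈ insert (k + 1) E, i ≤ k + 1 := by
      simpa using fun i hi => (hbound hE i hi).trans k.le_succ
    rw [majE_insert_succ_of_mem hle (mem_insert_self _ _), pow_succ, mul_comm]
  rw [majSum_succ q (k + 1), ← insert_Icc_right_eq_Icc_add_one (by omega : 1 ≤ k + 1),
    sum_powerset_insert (by simp), hnew_descent, hshifted_descent]
  ring

end MajSum

/-- The polynomials `p_n(q) = ∑_{E ⊆ [n]} q^{maj(E)}` satisfy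
`p_n = (1+q) p_{n-1} + (q^n - q) p_{n-2}` for `n ≥ 2`, with `p_0 = 1`, `p_1 = 1 + q`. -/
theorem majE_recurrence (R : Type*) [CommRing R] (q : R) :
    (∑ E ∈ (Finset.Icc 1 0).powerset, q ^ majE E) = 1 ∧
    (∑ E ∈ (Finset.Icc 1 1).powerset, q ^ majE E) = 1 + q ∧
    ∀ n, 2 ≤ n →
      (∑ E ∈ (Finset.Icc 1 n).powerset, q ^ majE E) =
        (1 + q) * (∑ E ∈ (Finset.Icc 1 (n - 1)).powerset, q ^ majE E) +
          (q ^ n - q) * (∑ E ∈ (Finset.Icc 1 (n - 2)).powerset, q ^ majE E) := by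
  refine ⟨majSum_zero q, majSum_one q, fun n hn => ?_⟩
  obtain ⟨k, rfl⟩ := Nat.exists_eq_add_of_le' hn
  exact majSum_add_two q k
end

section
/- For every subset E of [n], des(E) = |{i ∈ E : i+1 ∉ E}| satisfies: the number of subsets E ⊆ [n] with des(E) = k equals the binomial coefficient C(n+1, 2k). -/
open Finset Polynomial
open scoped Classical

/-!
The map `boundary E = E ∆ (E + 1)` sends a set to the boundary points of its maximal runs: each run
`[a, b]` contributes `a` and `b + 1`, so the image of `E ⊆ [n]` is a subset of `[n + 1]` of size
`2 des(E)`. The map is injective, because `D = E ∆ F` would satisfy `D + 1 = D`, forcing `D = ∅`.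
Both `𝒫 [n]` and the even subsets of `[n + 1]` have `2 ^ n` elements, so it is a bijection between
them, and the subsets with `des(E) = k` correspond to the `2k`-subsets of `[n + 1]`.
-/

open scoped symmDiff

theorem Finset.two_mul_card_powerset_filter_even {α : Type*} {s : Finset α} (hs : s.Nonempty) :
    2 * #{t ∈ s.powerset | Even #t} = 2 ^ #s := by
  have hsum : #{t ∈ s.powerset | Even #t} + #{t ∈ s.powerset | ¬Even #t} = 2 ^ #s := by
    rw [card_filter_add_card_filter_not, card_powerset]
  have hdiff : (#{t ∈ s.powerset | Even #t} : ℤ) - #{t ∈ s.powerset | ¬Even #t} = 0 := by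
    rw [← sum_powerset_neg_one_pow_card_of_nonempty hs,
      ← sum_filter_add_sum_filter_not _ (fun t => Even #t),
      sum_congr rfl fun t ht => (mem_filter.1 ht).2.neg_one_pow,
      sum_congr rfl fun t ht => (Nat.not_even_iff_odd.1 (mem_filter.1 ht).2).neg_one_pow]
    simp [sub_eq_add_neg]
  omega

def boundary (E : Finset ℕ) : Finset ℕ := E ∆ E.image (· + 1)

theorem eq_empty_of_image_succ_eq {D : Finset ℕ} (h : D.image (· + 1) = D) : D = ∅ := by
  have hsum : ∑ i ∈ D, i + #D = ∑ i ∈ D, i :=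
    calc ∑ i ∈ D, i + #D = ∑ i ∈ D, (i + 1) := by rw [sum_add_distrib, card_eq_sum_ones]
      _ = ∑ i ∈ D.image (· + 1), i := by
        rw [sum_image fun _ _ _ _ => Nat.add_right_cancel]
      _ = ∑ i ∈ D, i := by rw [h]
  exact card_eq_zero.1 (by omega)

theorem boundary_injective : Function.Injective boundary := by
  intro E F h
  have hD : E ∆ F ∆ (E.image (· + 1) ∆ F.image (· + 1)) = ∅ := by
    rw [← symmDiff_symmDiff_symmDiff_comm]
    exact symmDiff_eq_empty.2 h
  rw [← image_symmDiff _ _ (add_left_injective 1), symmDiff_eq_empty] at hD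
  exact symmDiff_eq_empty.1 (eq_empty_of_image_succ_eq hD.symm)

theorem image_succ_sdiff_eq_image_DesE (E : Finset ℕ) :
    E.image (· + 1) \ E = (DesE E).image (· + 1) := by
  ext i
  simp only [DesE, mem_sdiff, mem_image, mem_filter]
  grind

theorem card_boundary (E : Finset ℕ) : #(boundary E) = 2 * desE E := by
  have hcard : #(E.image (· + 1)) = #E := card_image_of_injective _ (add_left_injective 1)
  rw [boundary, Finset.symmDiff_def, card_union_of_disjoint disjoint_sdiff_sdiff,
    card_sdiff_comm hcard.symm, image_succ_sdiff_eq_image_DesE,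
    card_image_of_injective _ (add_left_injective 1), desE]
  ring

theorem boundary_subset_Icc {E : Finset ℕ} {n : ℕ} (hE : E ⊆ Icc 1 n) :
    boundary E ⊆ Icc 1 (n + 1) := by
  intro i hi
  simp only [boundary, Finset.symmDiff_def, mem_union, mem_sdiff, mem_image] at hi
  have := fun j (hj : j ∈ E) => mem_Icc.1 (hE hj)
  rw [mem_Icc]
  grind

theorem image_boundary_powerset_Icc (n : ℕ) :
    (Icc 1 n).powerset.image boundary = {B ∈ (Icc 1 (n + 1)).powerset | Even #B} := by
  refine eq_of_subset_of_card_le ?_ ?_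
  · simp only [subset_iff, mem_image, mem_powerset, mem_filter]
    rintro _ ⟨E, hE, rfl⟩
    exact ⟨boundary_subset_Icc hE, card_boundary E ▸ even_two_mul _⟩
  · have h := two_mul_card_powerset_filter_even (nonempty_Icc.2 (Nat.le_add_left 1 n))
    rw [Nat.card_Icc, Nat.add_sub_cancel, pow_succ] at h
    rw [card_image_of_injective _ boundary_injective, card_powerset, Nat.card_Icc,
      Nat.add_sub_cancel]
    omega

/-- The number of subsets `E ⊆ [n]` with `des(E) = k` is `C(n+1, 2k)`. -/
theorem card_subsets_with_desE (n k : ℕ) :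
    (((Finset.Icc 1 n).powerset).filter (fun E => desE E = k)).card =
      (n + 1).choose (2 * k) := by
  have hfilter : ((Icc 1 n).powerset.image boundary).filter (#· = 2 * k) =
      ((Icc 1 n).powerset.filter (desE · = k)).image boundary := by
    simp only [filter_image, card_boundary, Nat.mul_left_cancel_iff two_pos]
  calc #{E ∈ (Icc 1 n).powerset | desE E = k}
      = #(((Icc 1 n).powerset.filter (desE · = k)).image boundary) :=
        (card_image_of_injective _ boundary_injective).symm
    _ = #{B ∈ (Icc 1 (n + 1)).powerset | Even #B ∧ #B = 2 * k} := by
        rw [← hfilter, image_boundary_powerset_Icc, filter_filter]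
    _ = #(powersetCard (2 * k) (Icc 1 (n + 1))) := by
        rw [powersetCard_eq_filter]
        congr 1
        exact filter_congr fun B _ => ⟨And.right, fun h => ⟨h ▸ even_two_mul k, h⟩⟩
    _ = (n + 1).choose (2 * k) := by rw [card_powersetCard, Nat.card_Icc, Nat.add_sub_cancel]
end
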